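/- arXiv:1309.7807 — 8 statements merged into one kernel-verified Lean document; each statement's English description precedes it below -/
import Mathlib

section
/- Propagation step for the filter distribution: for every n ≥ 1, if 0 < μ_{n-1,n-1}(S^n) < ∞, then the one-step predictive distribution satisfies π_{n|n-1}(dx_n) = ∫ π_{n-1}(dx_{n-1}) P(dx_n|x_{n-1}); i.e., π_{n|n-1} equals the image of π_{n-1} under the kernel P (the measure bind of π_{n-1} with P). -/
open MeasureTheory ProbabilityTheory
open scoped ENNReal NNReal

/-- Law of the first `n+1` steps `(X_0, …, X_n)` of a Markov chain with initial
distribution `π0` and transition kernel `P`. -/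
noncomputable def chainLaw {S : Type*} [MeasurableSpace S] (π0 : Measure S)
    (P : Kernel S S) : (n : ℕ) → Measure (Fin (n + 1) → S)
  | 0 => π0.map (fun x => fun _ => x)
  | n + 1 => (chainLaw π0 P n).bind (fun x => (P (x (Fin.last n))).map (Fin.snoc x))

open Fin.NatCast in
/-- The finite measure `μ_{n,m}(dx_{0:n}) = π0(dx_0) ∏_{t=1}^n P(dx_t|x_{t-1})
∏_{t=1}^m g(y_t|x_t)` on `S^{n+1}`. -/
noncomputable def ssmMu {S : Type*} [MeasurableSpace S] {d : ℕ} (π0 : Measure S)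
    (P : Kernel S S) (g : (Fin d → ℝ) → S → ℝ) (y : ℕ → Fin d → ℝ) (n m : ℕ) :
    Measure (Fin (n + 1) → S) :=
  (chainLaw π0 P n).withDensity
    (fun x => ∏ t ∈ Finset.Icc 1 m, ENNReal.ofReal (g (y t) (x (t : Fin (n + 1)))))

/-- The conditional distribution `π_{0:n|m}`, i.e. `μ_{n,m}` normalized to a
probability measure. -/
noncomputable def ssmPi {S : Type*} [MeasurableSpace S] {d : ℕ} (π0 : Measure S)
    (P : Kernel S S) (g : (Fin d → ℝ) → S → ℝ) (y : ℕ → Fin d → ℝ) (n m : ℕ) :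
    Measure (Fin (n + 1) → S) :=
  (ssmMu π0 P g y n m Set.univ)⁻¹ • ssmMu π0 P g y n m

/-- The marginal `π_{n|m}` of `π_{0:n|m}` in the last coordinate `x_n`. -/
noncomputable def ssmPiMarg {S : Type*} [MeasurableSpace S] {d : ℕ} (π0 : Measure S)
    (P : Kernel S S) (g : (Fin d → ℝ) → S → ℝ) (y : ℕ → Fin d → ℝ) (n m : ℕ) :
    Measure S :=
  (ssmPi π0 P g y n m).map (fun x => x (Fin.last n))


/-!
The observation weights `∏_{t ≤ m} g(y_t | x_t)` do not involve `x_{n+1}` when `m ≤ n`, so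
`μ_{n+1,m}` is `μ_{n,m}` followed by one step of the path chain, `x_{0:n} ↦ (x_{0:n}, X_{n+1})`
with `X_{n+1} ~ P(· | x_n)`. This step preserves total mass because `P` is Markov, hence
`π_{0:n+1|m}` is `π_{0:n|m}` followed by the same step, and taking last marginals gives
`π_{n+1|n} = π_n P`.
-/

namespace MeasureTheory.Measure

variable {α β γ : Type*} [MeasurableSpace α] [MeasurableSpace β] [MeasurableSpace γ]

lemma map_bind {m : Measure α} {κ : α → Measure β} (hκ : Measurable κ) {f : β → γ}
    (hf : Measurable f) : (m.bind κ).map f = m.bind fun a => (κ a).map f := by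
  ext s hs
  have hfκ : Measurable fun a => (κ a).map f := (measurable_map f hf).comp hκ
  rw [map_apply hf hs, bind_apply (hf hs) hκ.aemeasurable, bind_apply hs hfκ.aemeasurable]
  simp_rw [map_apply hf hs]

lemma bind_map {m : Measure α} {f : α → β} (hf : Measurable f) {κ : β → Measure γ}
    (hκ : Measurable κ) : (m.map f).bind κ = m.bind (κ ∘ f) := by
  ext s hs
  have hκs : Measurable fun b => κ b s := (measurable_coe hs).comp hκ
  rw [bind_apply hs hκ.aemeasurable, bind_apply hs (hκ.comp hf).aemeasurable,
    lintegral_map hκs hf]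
  rfl

lemma withDensity_bind {m : Measure α} {κ : α → Measure β} (hκ : Measurable κ)
    {f : β → ℝ≥0∞} {c : α → ℝ≥0∞} (hf : Measurable f) (hc : Measurable c)
    (hfc : ∀ a, ∀ᵐ b ∂κ a, f b = c a) :
    (m.bind κ).withDensity f = (m.withDensity c).bind κ := by
  ext s hs
  have hκs : Measurable fun a => κ a s := (measurable_coe hs).comp hκ
  rw [withDensity_apply _ hs, bind_apply hs hκ.aemeasurable, ← lintegral_indicator hs,
    lintegral_bind hκ.aemeasurable (hf.indicator hs).aemeasurable,
    lintegral_withDensity_eq_lintegral_mul _ hc hκs]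
  refine lintegral_congr fun a => ?_
  rw [lintegral_indicator hs, setLIntegral_congr_fun_ae hs ((hfc a).mono fun b hb _ => hb),
    setLIntegral_const, Pi.mul_apply]

end MeasureTheory.Measure

open Fin.NatCast in
lemma Fin.natCast_eq_castSucc {n t : ℕ} (ht : t ≤ n) :
    (t : Fin (n + 2)) = Fin.castSucc (t : Fin (n + 1)) := by
  ext
  simp only [Fin.val_natCast, Fin.val_castSucc]
  rw [Nat.mod_eq_of_lt (by omega), Nat.mod_eq_of_lt (by omega)]

section chain

variable {S : Type*} [MeasurableSpace S] {n : ℕ}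

lemma measurable_fin_snoc :
    Measurable fun p : (Fin n → S) × S => (Fin.snoc p.1 p.2 : Fin (n + 1) → S) := by
  refine measurable_pi_iff.2 fun i => ?_
  induction i using Fin.lastCases with
  | last => simpa only [Fin.snoc_last] using measurable_snd
  | cast j =>
    simp only [Fin.snoc_castSucc]
    exact (measurable_pi_apply j).comp measurable_fst

lemma measurable_fin_snoc_right (x : Fin n → S) :
    Measurable fun z : S => (Fin.snoc x z : Fin (n + 1) → S) :=
  measurable_fin_snoc.comp (measurable_const.prodMk measurable_id)

noncomputable def chainStep (P : Kernel S S) (n : ℕ) (x : Fin (n + 1) → S) :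
    Measure (Fin (n + 2) → S) :=
  (P (x (Fin.last n))).map (Fin.snoc x)

variable {P : Kernel S S}

lemma chainLaw_succ (π0 : Measure S) :
    chainLaw π0 P (n + 1) = (chainLaw π0 P n).bind (chainStep P n) := rfl

lemma measurable_chainStep [IsSFiniteKernel P] : Measurable (chainStep P n) := by
  refine Measure.measurable_of_measurable_coe _ fun s hs => ?_
  simp_rw [chainStep, Measure.map_apply (measurable_fin_snoc_right _) hs]
  exact (P.comap _ (measurable_pi_apply (Fin.last n))).measurable_kernel_prodMk_left
    (measurable_fin_snoc hs)

lemma isProbabilityMeasure_chainStep [IsMarkovKernel P] (x : Fin (n + 1) → S) :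
    IsProbabilityMeasure (chainStep P n x) :=
  Measure.isProbabilityMeasure_map (measurable_fin_snoc_right x).aemeasurable

lemma ae_chainStep_of_forall_snoc (x : Fin (n + 1) → S) {p : (Fin (n + 2) → S) → Prop}
    (hp : MeasurableSet {w | p w}) (hpx : ∀ z, p (Fin.snoc x z)) : ∀ᵐ w ∂chainStep P n x, p w :=
  (ae_map_iff (measurable_fin_snoc_right x).aemeasurable hp).2 (ae_of_all _ hpx)

lemma chainStep_map_last (x : Fin (n + 1) → S) :
    (chainStep P n x).map (fun w => w (Fin.last (n + 1))) = P (x (Fin.last n)) := by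
  rw [chainStep, Measure.map_map (measurable_pi_apply _) (measurable_fin_snoc_right x)]
  simp only [Function.comp_def, Fin.snoc_last, Measure.map_id']

end chain

section filter

variable {S : Type*} [MeasurableSpace S] {d : ℕ} (π0 : Measure S) {P : Kernel S S}
  {g : (Fin d → ℝ) → S → ℝ} (y : ℕ → Fin d → ℝ) {n m : ℕ}

open Fin.NatCast in
lemma ssmMu_succ_left [IsSFiniteKernel P] (hgm : ∀ y, Measurable (g y)) (hm : m ≤ n) :
    ssmMu π0 P g y (n + 1) m = (ssmMu π0 P g y n m).bind (chainStep P n) := by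
  have hweight : ∀ k : ℕ, Measurable fun x : Fin (k + 1) → S =>
      ∏ t ∈ Finset.Icc 1 m, ENNReal.ofReal (g (y t) (x (t : Fin (k + 1)))) := fun k =>
    Finset.measurable_prod _ fun t _ =>
      ENNReal.measurable_ofReal.comp ((hgm _).comp (measurable_pi_apply _))
  rw [ssmMu, ssmMu, chainLaw_succ]
  refine Measure.withDensity_bind measurable_chainStep (hweight _) (hweight _) fun x =>
    ae_chainStep_of_forall_snoc x (measurableSet_eq_fun (hweight _) measurable_const) fun z =>
      Finset.prod_congr rfl fun t ht => ?_
  rw [Fin.natCast_eq_castSucc ((Finset.mem_Icc.1 ht).2.trans hm), Fin.snoc_castSucc]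

lemma ssmPi_succ_left [IsMarkovKernel P] (hgm : ∀ y, Measurable (g y)) (hm : m ≤ n) :
    ssmPi π0 P g y (n + 1) m = (ssmPi π0 P g y n m).bind (chainStep P n) := by
  have hmass : ssmMu π0 P g y (n + 1) m Set.univ = ssmMu π0 P g y n m Set.univ := by
    rw [ssmMu_succ_left π0 y hgm hm, Measure.bind_apply .univ measurable_chainStep.aemeasurable]
    simp_rw [fun x => (isProbabilityMeasure_chainStep (P := P) x).measure_univ, lintegral_one]
  rw [ssmPi, ssmPi, hmass, ssmMu_succ_left π0 y hgm hm, Measure.bind_smul]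

end filter

/-- The paper's `n` is `n + 1` here. -/
theorem filter_propagation_step_general {S : Type*} [MeasurableSpace S] {d : ℕ}
    (π0 : Measure S) (P : Kernel S S) [IsMarkovKernel P]
    (g : (Fin d → ℝ) → S → ℝ) (hgm : ∀ y, Measurable (g y))
    (y : ℕ → Fin d → ℝ) (n : ℕ) :
    ssmPiMarg π0 P g y (n + 1) n = (ssmPiMarg π0 P g y n n).bind (fun x => P x) := by
  rw [ssmPiMarg, ssmPi_succ_left π0 y hgm le_rfl,
    Measure.map_bind measurable_chainStep (measurable_pi_apply _), ssmPiMarg,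
    Measure.bind_map (measurable_pi_apply _) P.measurable]
  simp_rw [chainStep_map_last]
  rfl

/-- **Propagation step for the filter distribution.**
For every `n ≥ 1` (here the paper's `n` is `n+1`), if `0 < μ_{n-1,n-1}(Sⁿ) < ∞`,
then the one-step predictive distribution satisfies
`π_{n|n-1}(dx_n) = ∫ π_{n-1}(dx_{n-1}) P(dx_n|x_{n-1})`, i.e. `π_{n|n-1}` is the
bind of `π_{n-1}` with the kernel `P`. -/
theorem filter_propagation_step {S : Type*} [MeasurableSpace S] {d : ℕ}
    (π0 : Measure S) [IsProbabilityMeasure π0] (P : Kernel S S) [IsMarkovKernel P]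
    (g : (Fin d → ℝ) → S → ℝ) (hg0 : ∀ y x, 0 ≤ g y x) (hgm : ∀ y, Measurable (g y))
    (ν : Measure (Fin d → ℝ)) [SigmaFinite ν] (y : ℕ → Fin d → ℝ) (n : ℕ)
    (hpos : 0 < ssmMu π0 P g y n n Set.univ) (hfin : ssmMu π0 P g y n n Set.univ < ⊤) :
    ssmPiMarg π0 P g y (n + 1) n = (ssmPiMarg π0 P g y n n).bind (fun x => P x) :=
  filter_propagation_step_general π0 P g hgm y n
end

section
/- Update step for the filter distribution: for every n ≥ 1, if 0 < μ_{n,n-1}(S^{n+1}) < ∞ and 0 < p_n < ∞ where p_n := ∫ g(y_n|x_n) π_{n|n-1}(dx_n), then π_n is absolutely continuous with respect to π_{n|n-1} with density x_n ↦ g(y_n|x_n)/p_n; i.e., π_n(dx_n) = π_{n|n-1}(dx_n) · g(y_n|x_n)/p_n. -/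
open MeasureTheory ProbabilityTheory
open scoped ENNReal NNReal

/-!
Bayes' rule on path space: `μ_{n,n}` is `μ_{n,n-1}` reweighted by `g(y_n | x_n)`, a density
that depends on the path only through its last coordinate. Normalizing a reweighted finite
measure divides the density by its mean `p_n` under the normalized measure, and pushing a
measure forward along `x ↦ x_n` commutes with reweighting by a function of `x_n`.
-/

namespace MeasureTheory.Measure

variable {α β : Type*} [MeasurableSpace α] [MeasurableSpace β]

theorem map_withDensity_comp {μ : Measure α} {φ : α → β} {f : β → ℝ≥0∞}
    (hφ : Measurable φ) (hf : Measurable f) :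
    (μ.withDensity (f ∘ φ)).map φ = (μ.map φ).withDensity f := by
  ext s hs
  rw [map_apply hφ hs, withDensity_apply _ (hφ hs), withDensity_apply _ hs,
    setLIntegral_map hs hf hφ]
  rfl

theorem inv_withDensity_univ_smul_withDensity {μ : Measure α} {h : α → ℝ≥0∞}
    (hh : Measurable h) (hμ0 : μ Set.univ ≠ 0) (hμ : μ Set.univ ≠ ∞) {p : ℝ≥0∞}
    (hp : p = ∫⁻ x, h x ∂((μ Set.univ)⁻¹ • μ)) :
    ((μ.withDensity h) Set.univ)⁻¹ • μ.withDensity h =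
      ((μ Set.univ)⁻¹ • μ).withDensity (fun x => h x / p) := by
  have hmass : μ.withDensity h Set.univ = μ Set.univ * p := by
    rw [withDensity_apply _ MeasurableSet.univ, restrict_univ, hp, lintegral_smul_measure,
      smul_eq_mul, ← mul_assoc, ENNReal.mul_inv_cancel hμ0 hμ, one_mul]
  have hdiv : (fun x => h x / p) = p⁻¹ • h := by
    funext x
    simp [ENNReal.div_eq_inv_mul]
  rw [hmass, hdiv, withDensity_smul_measure, withDensity_smul _ hh, smul_smul,
    ENNReal.mul_inv (Or.inl hμ0) (Or.inl hμ), mul_comm]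

end MeasureTheory.Measure

section StateSpaceModel

variable {S : Type*} [MeasurableSpace S] {d : ℕ} {π0 : Measure S} {P : Kernel S S}
  {g : (Fin d → ℝ) → S → ℝ} {y : ℕ → Fin d → ℝ}

open Fin.NatCast in
theorem ssmMu_succ_right (hgm : ∀ y, Measurable (g y)) (n m : ℕ) :
    ssmMu π0 P g y n (m + 1) = (ssmMu π0 P g y n m).withDensity
      (fun x => ENNReal.ofReal (g (y (m + 1)) (x ((m + 1 : ℕ) : Fin (n + 1))))) := by
  have hfactor (t : ℕ) :
      Measurable fun x : Fin (n + 1) → S => ENNReal.ofReal (g (y t) (x (t : Fin (n + 1)))) :=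
    ((hgm _).comp (measurable_pi_apply _)).ennreal_ofReal
  unfold ssmMu
  rw [← withDensity_mul _ (Finset.measurable_prod _ fun t _ => hfactor t) (hfactor _)]
  congr 1
  funext x
  exact Finset.prod_Icc_succ_top (Nat.le_add_left 1 m) _

end StateSpaceModel

theorem filter_update_step_general {S : Type*} [MeasurableSpace S] {d : ℕ}
    (π0 : Measure S) (P : Kernel S S)
    (g : (Fin d → ℝ) → S → ℝ) (hgm : ∀ y, Measurable (g y))
    (y : ℕ → Fin d → ℝ) (n : ℕ)
    (hpos : 0 < ssmMu π0 P g y (n + 1) n Set.univ)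
    (hfin : ssmMu π0 P g y (n + 1) n Set.univ < ⊤)
    (p : ℝ≥0∞)
    (hp : p = ∫⁻ x, ENNReal.ofReal (g (y (n + 1)) x) ∂(ssmPiMarg π0 P g y (n + 1) n)) :
    ssmPiMarg π0 P g y (n + 1) (n + 1) =
      (ssmPiMarg π0 P g y (n + 1) n).withDensity
        (fun x => ENNReal.ofReal (g (y (n + 1)) x) / p) := by
  set f : S → ℝ≥0∞ := fun x => ENNReal.ofReal (g (y (n + 1)) x)
  have hf : Measurable f := (hgm _).ennreal_ofReal
  have hlast : Measurable fun x : Fin (n + 1 + 1) → S => x (Fin.last (n + 1)) :=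
    measurable_pi_apply _
  have hupdate : ssmMu π0 P g y (n + 1) (n + 1) =
      (ssmMu π0 P g y (n + 1) n).withDensity (f ∘ fun x => x (Fin.last (n + 1))) := by
    rw [ssmMu_succ_right hgm, Fin.natCast_eq_last]
    rfl
  have hp_path :
      p = ∫⁻ x, (f ∘ fun x => x (Fin.last (n + 1))) x ∂ssmPi π0 P g y (n + 1) n := by
    rw [hp, ssmPiMarg, lintegral_map hf hlast]
    rfl
  unfold ssmPiMarg ssmPi at *
  rw [hupdate, Measure.inv_withDensity_univ_smul_withDensity (hf.comp hlast) hpos.ne' hfin.ne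
    hp_path]
  exact Measure.map_withDensity_comp (f := fun x => f x / p) hlast (hf.div_const p)

/-- **Update step for the filter distribution.**
For every `n ≥ 1` (here the paper's `n` is `n+1`), if `0 < μ_{n,n-1}(S^{n+1}) < ∞`
and `0 < p_n < ∞` where `p_n = ∫ g(y_n|x_n) π_{n|n-1}(dx_n)`, then
`π_n(dx_n) = π_{n|n-1}(dx_n) · g(y_n|x_n)/p_n`. -/
theorem filter_update_step {S : Type*} [MeasurableSpace S] {d : ℕ}
    (π0 : Measure S) [IsProbabilityMeasure π0] (P : Kernel S S) [IsMarkovKernel P]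
    (g : (Fin d → ℝ) → S → ℝ) (hg0 : ∀ y x, 0 ≤ g y x) (hgm : ∀ y, Measurable (g y))
    (ν : Measure (Fin d → ℝ)) [SigmaFinite ν] (y : ℕ → Fin d → ℝ) (n : ℕ)
    (hpos : 0 < ssmMu π0 P g y (n + 1) n Set.univ)
    (hfin : ssmMu π0 P g y (n + 1) n Set.univ < ⊤)
    (p : ℝ≥0∞)
    (hp : p = ∫⁻ x, ENNReal.ofReal (g (y (n + 1)) x) ∂(ssmPiMarg π0 P g y (n + 1) n))
    (hp0 : 0 < p) (hpfin : p < ⊤) :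
    ssmPiMarg π0 P g y (n + 1) (n + 1) =
      (ssmPiMarg π0 P g y (n + 1) n).withDensity
        (fun x => ENNReal.ofReal (g (y (n + 1)) x) / p) :=
  filter_update_step_general π0 P g hgm y n hpos hfin p hp
end

section
/- Kalman filter update (Gaussian Bayes formula): let the prior be the Gaussian measure N(m, Σ) on ℝ^k with Σ symmetric positive definite, let H be a d×k real matrix, R a d×d symmetric positive definite matrix, and y ∈ ℝ^d. Let φ_{Hx,R}(y) denote the density at y of N(Hx, R) with respect to Lebesgue measure on ℝ^d, and set Z = ∫ φ_{Hx,R}(y) N(m,Σ)(dx). Then 0 < Z < ∞ and the probability measure Z^{-1} φ_{Hx,R}(y) N(m,Σ)(dx) equals the Gaussian measure N(m + K(y − Hm), Σ − KHΣ), where K = ΣHᵀ(HΣHᵀ + R)^{-1} is the Kalman gain. -/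
open MeasureTheory Matrix
open scoped ENNReal NNReal

/-- The density at `x` of the Gaussian measure `N(m, S)` on `ℝ^n` (for `S`
symmetric positive definite) with respect to Lebesgue measure. -/
noncomputable def gaussDensity {n : ℕ} (m : Fin n → ℝ) (S : Matrix (Fin n) (Fin n) ℝ)
    (x : Fin n → ℝ) : ℝ :=
  (Real.sqrt ((2 * Real.pi) ^ n * S.det))⁻¹ *
    Real.exp (-((x - m) ⬝ᵥ (S⁻¹ *ᵥ (x - m))) / 2)

/-- The Gaussian measure `N(m, S)` on `ℝ^n` (for `S` symmetric positive
definite), defined through its Lebesgue density. -/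
noncomputable def gaussMeasure {n : ℕ} (m : Fin n → ℝ)
    (S : Matrix (Fin n) (Fin n) ℝ) : Measure (Fin n → ℝ) :=
  volume.withDensity fun x => ENNReal.ofReal (gaussDensity m S x)

/-!
Completing the square in `x` gives
`(x-m)ᵀΣ⁻¹(x-m) + (y-Hx)ᵀR⁻¹(y-Hx) = (y-Hm)ᵀ(HΣHᵀ+R)⁻¹(y-Hm) + (x-m')ᵀ(Σ⁻¹+HᵀR⁻¹H)(x-m')`
with `m' = m + K(y-Hm)`, and by the Woodbury identity `Σ⁻¹ + HᵀR⁻¹H` is the inverse of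
`Σ' = Σ - KHΣ`. Together with `det Σ' · det(HΣHᵀ+R) = det Σ · det R` (matrix determinant lemma)
this factors prior density times likelihood as `φ_{Hm,HΣHᵀ+R}(y) · φ_{m',Σ'}(x)`. As `φ_{m',Σ'}`
integrates to one, `Z = φ_{Hm,HΣHᵀ+R}(y)`, and dividing by it leaves `N(m', Σ')`.
-/

open Real

namespace Matrix

lemma PosDef.isSymm {ι : Type*} {S : Matrix ι ι ℝ} (hS : S.PosDef) : S.IsSymm := by
  rw [IsSymm, ← conjTranspose_eq_transpose_of_trivial]
  exact hS.isHermitian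

variable {ι κ ν : Type*} [Fintype ι] [Fintype κ]

lemma mulVec_dotProduct_mulVec [Fintype ν] (A : Matrix κ ι ℝ) (M : Matrix κ ν ℝ) (u : ι → ℝ)
    (w : ν → ℝ) : (A *ᵥ u) ⬝ᵥ (M *ᵥ w) = u ⬝ᵥ ((Aᵀ * M) *ᵥ w) := by
  rw [← mulVec_mulVec, dotProduct_mulVec u Aᵀ, vecMul_transpose]

lemma IsSymm.dotProduct_mulVec_comm {M : Matrix ι ι ℝ} (hM : M.IsSymm) (u v : ι → ℝ) :
    v ⬝ᵥ (M *ᵥ u) = u ⬝ᵥ (M *ᵥ v) := by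
  rw [dotProduct_mulVec, dotProduct_comm, ← vecMul_transpose, hM.eq]

lemma IsSymm.sub_dotProduct_mulVec_sub {M : Matrix ι ι ℝ} (hM : M.IsSymm) (u v : ι → ℝ) :
    (u - v) ⬝ᵥ (M *ᵥ (u - v)) = u ⬝ᵥ (M *ᵥ u) - 2 * (u ⬝ᵥ (M *ᵥ v)) + v ⬝ᵥ (M *ᵥ v) := by
  rw [mulVec_sub, dotProduct_sub, sub_dotProduct, sub_dotProduct, hM.dotProduct_mulVec_comm v u]
  ring

variable {S : Matrix ι ι ℝ} {R : Matrix κ κ ℝ}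

lemma PosDef.mul_mul_transpose_add (hS : S.PosDef) (hR : R.PosDef) (H : Matrix κ ι ℝ) :
    (H * S * Hᵀ + R).PosDef := by
  refine PosDef.posSemidef_add ?_ hR
  simpa only [conjTranspose_eq_transpose_of_trivial] using
    hS.posSemidef.mul_mul_conjTranspose_same H

lemma PosDef.inv_add_transpose_mul_inv_mul [DecidableEq ι] [DecidableEq κ] (hS : S.PosDef)
    (hR : R.PosDef) (H : Matrix κ ι ℝ) : (S⁻¹ + Hᵀ * R⁻¹ * H).PosDef := by
  refine hS.inv.add_posSemidef ?_
  simpa only [conjTranspose_eq_transpose_of_trivial, transpose_transpose] using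
    hR.inv.posSemidef.mul_mul_conjTranspose_same Hᵀ

end Matrix

noncomputable def kalmanGain {ι κ : Type*} [Fintype ι] [Fintype κ] [DecidableEq κ]
    (S : Matrix ι ι ℝ) (H : Matrix κ ι ℝ) (R : Matrix κ κ ℝ) : Matrix ι κ ℝ :=
  S * Hᵀ * (H * S * Hᵀ + R)⁻¹

section KalmanGain

variable {ι κ : Type*} [Fintype ι] [Fintype κ] [DecidableEq κ] {S : Matrix ι ι ℝ}
  {R : Matrix κ κ ℝ}

lemma sub_kalmanGain_mul_mul_eq_inv [DecidableEq ι] (hS : S.PosDef) (hR : R.PosDef)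
    (H : Matrix κ ι ℝ) : S - kalmanGain S H R * H * S = (S⁻¹ + Hᵀ * R⁻¹ * H)⁻¹ := by
  have hWoodbury := add_mul_mul_inv_eq_sub S⁻¹ Hᵀ R⁻¹ H hS.inv.isUnit hR.inv.isUnit
  rw [nonsing_inv_nonsing_inv _ hS.det_pos.ne'.isUnit,
    nonsing_inv_nonsing_inv _ hR.det_pos.ne'.isUnit, add_comm R] at hWoodbury
  rw [hWoodbury (hS.mul_mul_transpose_add hR H).isUnit, kalmanGain]

lemma Matrix.PosDef.sub_kalmanGain_mul_mul [DecidableEq ι] (hS : S.PosDef) (hR : R.PosDef)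
    (H : Matrix κ ι ℝ) : (S - kalmanGain S H R * H * S).PosDef := by
  rw [sub_kalmanGain_mul_mul_eq_inv hS hR]
  exact (hS.inv_add_transpose_mul_inv_mul hR H).inv

lemma inv_add_mul_kalmanGain [DecidableEq ι] (hS : S.PosDef) (hR : R.PosDef)
    (H : Matrix κ ι ℝ) : (S⁻¹ + Hᵀ * R⁻¹ * H) * kalmanGain S H R = Hᵀ * R⁻¹ := by
  have hSHt : (S⁻¹ + Hᵀ * R⁻¹ * H) * (S * Hᵀ) = Hᵀ * R⁻¹ * (H * S * Hᵀ + R) := by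
    simp only [Matrix.add_mul, Matrix.mul_add, Matrix.mul_assoc,
      nonsing_inv_mul_cancel_left _ _ hS.det_pos.ne'.isUnit,
      nonsing_inv_mul _ hR.det_pos.ne'.isUnit, Matrix.mul_one]
    rw [add_comm]
  rw [kalmanGain, ← Matrix.mul_assoc, hSHt,
    mul_nonsing_inv_cancel_right _ _ (hS.mul_mul_transpose_add hR H).det_pos.ne'.isUnit]

lemma transpose_kalmanGain_mul (hS : S.PosDef) (hR : R.PosDef) (H : Matrix κ ι ℝ) :
    (kalmanGain S H R)ᵀ * (Hᵀ * R⁻¹) = R⁻¹ - (H * S * Hᵀ + R)⁻¹ := by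
  have hInnov := hS.mul_mul_transpose_add hR H
  have hHSHt : H * S * (Hᵀ * R⁻¹) = (H * S * Hᵀ + R) * R⁻¹ - 1 := by
    rw [Matrix.add_mul, mul_nonsing_inv _ hR.det_pos.ne'.isUnit, add_sub_cancel_right]
    simp only [Matrix.mul_assoc]
  rw [kalmanGain, transpose_mul, transpose_nonsing_inv, hInnov.isSymm.eq, transpose_mul,
    transpose_transpose, hS.isSymm.eq, Matrix.mul_assoc, hHSHt, Matrix.mul_sub,
    ← Matrix.mul_assoc, nonsing_inv_mul _ hInnov.det_pos.ne'.isUnit, Matrix.one_mul,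
    Matrix.mul_one]

lemma det_sub_kalmanGain_mul_mul_mul_det [DecidableEq ι] (hS : S.PosDef) (hR : R.PosDef)
    (H : Matrix κ ι ℝ) :
    (S - kalmanGain S H R * H * S).det * (H * S * Hᵀ + R).det = S.det * R.det := by
  have hdetPrec := det_add_mul (Hᵀ * R⁻¹) H hS.inv.det_pos.ne'.isUnit
  have hdetInnov := det_add_mul (1 : Matrix κ κ ℝ) (H * S * Hᵀ) hR.det_pos.ne'.isUnit
  rw [nonsing_inv_nonsing_inv _ hS.det_pos.ne'.isUnit, det_nonsing_inv, Ring.inverse_eq_inv,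
    ← Matrix.mul_assoc] at hdetPrec
  rw [Matrix.one_mul, Matrix.mul_one, add_comm] at hdetInnov
  have hD : (1 + H * S * Hᵀ * R⁻¹).det ≠ 0 :=
    right_ne_zero_of_mul (hdetInnov ▸ (hS.mul_mul_transpose_add hR H).det_pos.ne')
  rw [sub_kalmanGain_mul_mul_eq_inv hS hR, det_nonsing_inv, Ring.inverse_eq_inv, hdetPrec,
    hdetInnov]
  field_simp

lemma kalmanGain_completeSquare [DecidableEq ι] (hS : S.PosDef) (hR : R.PosDef)
    (H : Matrix κ ι ℝ) (u : ι → ℝ) (e : κ → ℝ) :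
    u ⬝ᵥ (S⁻¹ *ᵥ u) + (e - H *ᵥ u) ⬝ᵥ (R⁻¹ *ᵥ (e - H *ᵥ u)) =
      e ⬝ᵥ ((H * S * Hᵀ + R)⁻¹ *ᵥ e) + (u - kalmanGain S H R *ᵥ e) ⬝ᵥ
        ((S⁻¹ + Hᵀ * R⁻¹ * H) *ᵥ (u - kalmanGain S H R *ᵥ e)) := by
  set K := kalmanGain S H R
  set P := S⁻¹ + Hᵀ * R⁻¹ * H
  have hRinv : R⁻¹.IsSymm := hR.inv.isSymm
  have hP : P.IsSymm := (hS.inv_add_transpose_mul_inv_mul hR H).isSymm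
  have hPK : P * K = Hᵀ * R⁻¹ := inv_add_mul_kalmanGain hS hR H
  have huPu : u ⬝ᵥ (P *ᵥ u) = u ⬝ᵥ (S⁻¹ *ᵥ u) + (H *ᵥ u) ⬝ᵥ (R⁻¹ *ᵥ (H *ᵥ u)) := by
    rw [add_mulVec, dotProduct_add, mulVec_dotProduct_mulVec, mulVec_mulVec]
  have huPKe : u ⬝ᵥ (P *ᵥ (K *ᵥ e)) = e ⬝ᵥ (R⁻¹ *ᵥ (H *ᵥ u)) := by
    rw [mulVec_mulVec, hPK, ← mulVec_dotProduct_mulVec, hRinv.dotProduct_mulVec_comm]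
  have hKePKe : (K *ᵥ e) ⬝ᵥ (P *ᵥ (K *ᵥ e)) =
      e ⬝ᵥ (R⁻¹ *ᵥ e) - e ⬝ᵥ ((H * S * Hᵀ + R)⁻¹ *ᵥ e) := by
    rw [mulVec_mulVec, hPK, mulVec_dotProduct_mulVec, transpose_kalmanGain_mul hS hR H,
      sub_mulVec, dotProduct_sub]
  rw [hRinv.sub_dotProduct_mulVec_sub, hP.sub_dotProduct_mulVec_sub, huPu, huPKe, hKePKe]
  ring

end KalmanGain

section GaussianIntegral

variable {ι : Type*} [Fintype ι]

lemma exp_neg_dotProduct_self_div_two_eq_prod (u : ι → ℝ) :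
    exp (-(u ⬝ᵥ u) / 2) = ∏ i, exp (-2⁻¹ * u i ^ 2) := by
  rw [← exp_sum, dotProduct, neg_div, Finset.sum_div, ← Finset.sum_neg_distrib]
  exact congrArg exp (Finset.sum_congr rfl fun i _ => by ring)

lemma integrable_exp_neg_dotProduct_self_div_two :
    Integrable fun u : ι → ℝ => exp (-(u ⬝ᵥ u) / 2) := by
  simp_rw [exp_neg_dotProduct_self_div_two_eq_prod]
  exact Integrable.fintype_prod fun _ => integrable_exp_neg_mul_sq (by norm_num)

lemma integral_exp_neg_dotProduct_self_div_two :
    ∫ u : ι → ℝ, exp (-(u ⬝ᵥ u) / 2) = √((2 * π) ^ Fintype.card ι) := by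
  simp_rw [exp_neg_dotProduct_self_div_two_eq_prod]
  refine (integral_fintype_prod_eq_prod fun _ x => exp (-2⁻¹ * x ^ 2)).trans ?_
  simp only [integral_gaussian]
  rw [← sqrt_prod _ fun _ _ => by positivity, Finset.prod_const, Finset.card_univ, div_inv_eq_mul,
    mul_comm]

lemma lintegral_comp_mulVec [DecidableEq ι] {A : Matrix ι ι ℝ} (hA : A.det ≠ 0)
    {g : (ι → ℝ) → ℝ≥0∞} (hg : Measurable g) :
    ∫⁻ x, g x = ENNReal.ofReal |A.det| * ∫⁻ u, g (A *ᵥ u) := by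
  have hmap : ∫⁻ u, g (A *ᵥ u) = ∫⁻ x, g x ∂(Measure.map (toLin' A) volume) :=
    (lintegral_map hg (toLin' A).continuous_of_finiteDimensional.measurable).symm
  rw [hmap, Real.map_matrix_volume_pi_eq_smul_volume_pi hA, lintegral_smul_measure, smul_eq_mul,
    ← mul_assoc, ← ENNReal.ofReal_mul (abs_nonneg _), abs_inv, mul_inv_cancel₀ (abs_ne_zero.2 hA),
    ENNReal.ofReal_one, one_mul]

open scoped MatrixOrder in
lemma lintegral_exp_neg_dotProduct_inv_mulVec [DecidableEq ι] {S : Matrix ι ι ℝ}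
    (hS : S.PosDef) :
    ∫⁻ x : ι → ℝ, ENNReal.ofReal (exp (-(x ⬝ᵥ (S⁻¹ *ᵥ x)) / 2)) =
      ENNReal.ofReal √((2 * π) ^ Fintype.card ι * S.det) := by
  -- With `S = BᵀB`, the substitution `x = Bᵀu` turns the exponent into `-(u ⬝ᵥ u)/2`, and its
  -- Jacobian is `|det B| = √(det S)`.
  obtain ⟨B, hB⟩ := CStarAlgebra.nonneg_iff_eq_star_mul_self.mp hS.posSemidef.nonneg
  rw [star_eq_conjTranspose, conjTranspose_eq_transpose_of_trivial] at hB
  have hdet : S.det = B.det ^ 2 := by rw [hB, det_mul, det_transpose, sq]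
  have hB0 : IsUnit B.det := isUnit_iff_ne_zero.2 fun h => by simpa [hdet, h] using hS.det_pos
  have hquad (u : ι → ℝ) : (Bᵀ *ᵥ u) ⬝ᵥ (S⁻¹ *ᵥ (Bᵀ *ᵥ u)) = u ⬝ᵥ u := by
    rw [mulVec_dotProduct_mulVec, mulVec_mulVec, transpose_transpose, hB, Matrix.mul_inv_rev,
      ← Matrix.mul_assoc, mul_nonsing_inv _ hB0, Matrix.one_mul,
      nonsing_inv_mul _ (by rwa [det_transpose]), one_mulVec]
  rw [lintegral_comp_mulVec (A := Bᵀ) (by rw [det_transpose]; exact hB0.ne_zero) (by fun_prop)]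
  simp_rw [hquad]
  rw [← ofReal_integral_eq_lintegral_ofReal integrable_exp_neg_dotProduct_self_div_two
    (Filter.Eventually.of_forall fun _ => (exp_pos _).le),
    integral_exp_neg_dotProduct_self_div_two, ← ENNReal.ofReal_mul (abs_nonneg _), hdet,
    sqrt_mul (by positivity), sqrt_sq_eq_abs, det_transpose, mul_comm]

end GaussianIntegral

section GaussDensity

variable {n : ℕ} {S : Matrix (Fin n) (Fin n) ℝ}

@[fun_prop]
lemma Continuous.gaussDensity {α : Type*} [TopologicalSpace α] {m x : α → Fin n → ℝ}
    (hm : Continuous m) (hx : Continuous x) : Continuous fun a => gaussDensity (m a) S (x a) := by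
  unfold _root_.gaussDensity
  fun_prop

lemma gaussDensity_pos (hS : S.PosDef) (m x : Fin n → ℝ) : 0 < gaussDensity m S x :=
  mul_pos (inv_pos.2 (sqrt_pos.2 (mul_pos (by positivity) hS.det_pos))) (exp_pos _)

lemma lintegral_gaussDensity (hS : S.PosDef) (m : Fin n → ℝ) :
    ∫⁻ x, ENNReal.ofReal (gaussDensity m S x) = 1 := by
  have hnorm := lintegral_exp_neg_dotProduct_inv_mulVec hS
  have hc : 0 < √((2 * π) ^ n * S.det) := sqrt_pos.2 (mul_pos (by positivity) hS.det_pos)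
  rw [Fintype.card_fin] at hnorm
  simp_rw [gaussDensity, ENNReal.ofReal_mul (inv_nonneg.2 hc.le)]
  rw [lintegral_const_mul' _ _ ENNReal.ofReal_ne_top,
    lintegral_sub_right_eq_self (fun x => ENNReal.ofReal (exp (-(x ⬝ᵥ (S⁻¹ *ᵥ x)) / 2))) m,
    hnorm, ← ENNReal.ofReal_mul (inv_nonneg.2 hc.le), inv_mul_cancel₀ hc.ne', ENNReal.ofReal_one]

lemma isProbabilityMeasure_gaussMeasure (hS : S.PosDef) (m : Fin n → ℝ) :
    IsProbabilityMeasure (gaussMeasure m S) :=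
  ⟨by rw [gaussMeasure, withDensity_apply _ MeasurableSet.univ, Measure.restrict_univ,
    lintegral_gaussDensity hS m]⟩

end GaussDensity

section GaussianConditioning

variable {k d : ℕ} {S : Matrix (Fin k) (Fin k) ℝ} {R : Matrix (Fin d) (Fin d) ℝ}

lemma gaussDensity_mul_gaussDensity_mulVec (hS : S.PosDef) (hR : R.PosDef)
    (H : Matrix (Fin d) (Fin k) ℝ) (m x : Fin k → ℝ) (y : Fin d → ℝ) :
    gaussDensity m S x * gaussDensity (H *ᵥ x) R y =
      gaussDensity (H *ᵥ m) (H * S * Hᵀ + R) y *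
        gaussDensity (m + kalmanGain S H R *ᵥ (y - H *ᵥ m)) (S - kalmanGain S H R * H * S) x := by
  have hInnov := hS.mul_mul_transpose_add hR H
  have hPrec : (S - kalmanGain S H R * H * S)⁻¹ = S⁻¹ + Hᵀ * R⁻¹ * H := by
    rw [sub_kalmanGain_mul_mul_eq_inv hS hR,
      nonsing_inv_nonsing_inv _ (hS.inv_add_transpose_mul_inv_mul hR H).det_pos.ne'.isUnit]
  have hdet := det_sub_kalmanGain_mul_mul_mul_det hS hR H
  have hquad := kalmanGain_completeSquare hS hR H (x - m) (y - H *ᵥ m)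
  have hres : y - H *ᵥ x = (y - H *ᵥ m) - H *ᵥ (x - m) := by rw [mulVec_sub]; abel
  simp only [gaussDensity]
  rw [hPrec, hres, sub_add_eq_sub_sub, mul_mul_mul_comm, mul_mul_mul_comm _ (exp _), ← exp_add,
    ← exp_add, ← mul_inv, ← mul_inv, ← sqrt_mul (mul_pos (by positivity) hS.det_pos).le,
    ← sqrt_mul (mul_pos (by positivity) hInnov.det_pos).le]
  congr 1
  · congr 2
    linear_combination -((2 * π) ^ k * (2 * π) ^ d) * hdet
  · congr 1
    linear_combination -hquad / 2

lemma withDensity_gaussMeasure_gaussDensity_mulVec (hS : S.PosDef) (hR : R.PosDef)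
    (H : Matrix (Fin d) (Fin k) ℝ) (m : Fin k → ℝ) (y : Fin d → ℝ) :
    (gaussMeasure m S).withDensity (fun x => ENNReal.ofReal (gaussDensity (H *ᵥ x) R y)) =
      ENNReal.ofReal (gaussDensity (H *ᵥ m) (H * S * Hᵀ + R) y) •
        gaussMeasure (m + kalmanGain S H R *ᵥ (y - H *ᵥ m)) (S - kalmanGain S H R * H * S) := by
  rw [gaussMeasure, gaussMeasure, ← withDensity_mul _ (by fun_prop) (by fun_prop),
    ← withDensity_smul' _ _ ENNReal.ofReal_ne_top]
  congr 1 with x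
  rw [Pi.mul_apply, Pi.smul_apply, smul_eq_mul,
    ← ENNReal.ofReal_mul (gaussDensity_pos hS m x).le,
    ← ENNReal.ofReal_mul (gaussDensity_pos (hS.mul_mul_transpose_add hR H) _ y).le,
    gaussDensity_mul_gaussDensity_mulVec hS hR]

end GaussianConditioning

/-- **Kalman filter update (Gaussian Bayes formula).** Reweighting the Gaussian
prior `N(m, Σ)` by the observation density `x ↦ φ_{Hx,R}(y)` and normalizing by
`Z = ∫ φ_{Hx,R}(y) N(m,Σ)(dx)` (which satisfies `0 < Z < ∞`) yields the Gaussian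
measure `N(m + K(y − Hm), Σ − KHΣ)` with Kalman gain `K = ΣHᵀ(HΣHᵀ + R)⁻¹`. -/
theorem kalman_update {k d : ℕ} (m : Fin k → ℝ) (S : Matrix (Fin k) (Fin k) ℝ)
    (hS : S.PosDef) (H : Matrix (Fin d) (Fin k) ℝ) (R : Matrix (Fin d) (Fin d) ℝ)
    (hR : R.PosDef) (y : Fin d → ℝ)
    (Z : ℝ≥0∞)
    (hZ : Z = ∫⁻ x, ENNReal.ofReal (gaussDensity (H *ᵥ x) R y) ∂(gaussMeasure m S))
    (K : Matrix (Fin k) (Fin d) ℝ) (hK : K = S * Hᵀ * (H * S * Hᵀ + R)⁻¹) :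
    0 < Z ∧ Z < ⊤ ∧
      (gaussMeasure m S).withDensity
          (fun x => ENNReal.ofReal (gaussDensity (H *ᵥ x) R y) / Z) =
        gaussMeasure (m + K *ᵥ (y - H *ᵥ m)) (S - K * H * S) := by
  change K = kalmanGain S H R at hK
  subst hK
  have hjoint := withDensity_gaussMeasure_gaussDensity_mulVec hS hR H m y
  have := isProbabilityMeasure_gaussMeasure (hS.sub_kalmanGain_mul_mul hR H)
    (m + kalmanGain S H R *ᵥ (y - H *ᵥ m))
  have hZ_eq : Z = ENNReal.ofReal (gaussDensity (H *ᵥ m) (H * S * Hᵀ + R) y) := by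
    rw [hZ, ← setLIntegral_univ, ← withDensity_apply _ MeasurableSet.univ, hjoint]
    simp
  have hZ0 : Z ≠ 0 := hZ_eq ▸ (ENNReal.ofReal_pos.2 (gaussDensity_pos
    (hS.mul_mul_transpose_add hR H) _ y)).ne'
  have hZtop : Z ≠ ⊤ := hZ_eq ▸ ENNReal.ofReal_ne_top
  refine ⟨pos_iff_ne_zero.2 hZ0, lt_top_iff_ne_top.2 hZtop, ?_⟩
  have hdiv : (fun x => ENNReal.ofReal (gaussDensity (H *ᵥ x) R y) / Z) =
      Z⁻¹ • fun x => ENNReal.ofReal (gaussDensity (H *ᵥ x) R y) := by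
    ext x; rw [Pi.smul_apply, smul_eq_mul, ENNReal.div_eq_inv_mul]
  rw [hdiv, withDensity_smul' _ _ (ENNReal.inv_ne_top.2 hZ0), hjoint, ← hZ_eq, smul_smul,
    ENNReal.inv_mul_cancel hZ0 hZtop, one_smul]
end

section
/- Systematic (balanced) resampling: let W¹,…,W^N ≥ 0 with ∑_{k=1}^N W^k = 1, set a₀ = 0 and a_i = ∑_{k=1}^i W^k, let U be uniformly distributed on (0,1), and define N^i as the number of integers k with (U + k)/N ∈ (a_{i-1}, a_i]. Then (i) ∑_{i=1}^N N^i = N almost surely, (ii) 𝔼[N^i] = N W^i for every i, and (iii) |N^i − N W^i| < 1 almost surely for every i. -/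
open MeasureTheory
open scoped ENNReal NNReal

private lemma count_Ioc_real (x y : ℝ) :
    Nat.card {k : ℤ | x < (k : ℝ) ∧ (k : ℝ) ≤ y} = (⌊y⌋ - ⌊x⌋).toNat := by
  have h : {k : ℤ | x < (k : ℝ) ∧ (k : ℝ) ≤ y} = ↑(Finset.Ioc ⌊x⌋ ⌊y⌋) := by
    ext k
    simp [Int.floor_lt, Int.le_floor]
  rw [h, Nat.card_coe_set_eq, Set.ncard_coe_finset, Int.card_Ioc]

private lemma integral_fract_unit (c : ℝ) :
    ∫ u in (c - 1)..c, Int.fract u = 1 / 2 := by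
  have hper : Function.Periodic Int.fract (1 : ℝ) := fun x => Int.fract_add_one x
  have h := hper.intervalIntegral_add_eq (c - 1) 0
  rw [sub_add_cancel, zero_add] at h
  rw [h]
  have h1 : ∫ u in (0:ℝ)..1, Int.fract u = ∫ u in (0:ℝ)..1, u := by
    apply intervalIntegral.integral_congr_ae
    have h0 : ∀ᵐ x : ℝ, x ≠ (1:ℝ) := by
      refine ae_iff.mpr ?_
      simpa using measure_singleton (1 : ℝ)
    filter_upwards [h0] with x hx hmem
    rw [Set.uIoc_of_le (by norm_num : (0:ℝ) ≤ 1)] at hmem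
    exact Int.fract_eq_self.mpr ⟨hmem.1.le, lt_of_le_of_ne hmem.2 hx⟩
  rw [h1, integral_id]
  norm_num

private lemma integral_floor_unit (c : ℝ) :
    ∫ v in (c - 1)..c, (⌊v⌋ : ℝ) = c - 1 := by
  have hid : IntervalIntegrable (fun v : ℝ => v) volume (c - 1) c :=
    monotone_id.intervalIntegrable
  have hmonofl : Monotone (fun v : ℝ => (⌊v⌋ : ℝ)) := by
    intro s t h
    simp only [Int.cast_le]
    exact Int.floor_mono h
  have hfl : IntervalIntegrable (fun v : ℝ => (⌊v⌋ : ℝ)) volume (c - 1) c :=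
    hmonofl.intervalIntegrable
  have hsub : ∫ v in (c - 1)..c, Int.fract v
      = (∫ v in (c - 1)..c, v) - ∫ v in (c - 1)..c, (⌊v⌋ : ℝ) := by
    rw [← intervalIntegral.integral_sub hid hfl]
    rfl
  have h2 := integral_fract_unit c
  have h3 : ∫ v in (c - 1)..c, v = (c ^ 2 - (c - 1) ^ 2) / 2 := by
    simpa using integral_id (a := c - 1) (b := c)
  rw [hsub, h3] at h2
  nlinarith [h2]

private lemma integral_floor_sub (c : ℝ) :
    ∫ u in (0:ℝ)..1, (⌊c - u⌋ : ℝ) = c - 1 := by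
  have := intervalIntegral.integral_comp_sub_left (a := (0:ℝ)) (b := 1)
    (fun v : ℝ => (⌊v⌋ : ℝ)) c
  rw [this, sub_zero, integral_floor_unit]

/-- **Systematic (balanced) resampling.** Let `W¹,…,W^N ≥ 0` sum to `1`, let
`a_i = ∑_{k=1}^i W^k` be the cumulative weights, let `U` be uniform on `(0,1)`,
and let `Nⁱ` be the number of integers `k` with `(U + k)/N ∈ (a_{i-1}, a_i]`.
Then (i) `∑ᵢ Nⁱ = N` a.s., (ii) `𝔼[Nⁱ] = N Wⁱ`, and (iii) `|Nⁱ − N Wⁱ| < 1` a.s. -/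
theorem systematic_resampling_balanced {Ω : Type*} [MeasurableSpace Ω]
    (μ : Measure Ω) [IsProbabilityMeasure μ]
    (U : Ω → ℝ) (hU : Measurable U)
    (hUlaw : μ.map U = volume.restrict (Set.Ioo (0 : ℝ) 1))
    (N : ℕ) (hN : 1 ≤ N) (W : ℕ → ℝ)
    (hW0 : ∀ k ∈ Finset.Icc 1 N, 0 ≤ W k)
    (hW1 : ∑ k ∈ Finset.Icc 1 N, W k = 1)
    (a : ℕ → ℝ) (ha : ∀ i, a i = ∑ k ∈ Finset.Icc 1 i, W k)
    (Noff : ℝ → ℕ → ℕ)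
    (hNoff : ∀ u i, Noff u i =
      Nat.card {k : ℤ | a (i - 1) < (u + (k : ℝ)) / N ∧ (u + (k : ℝ)) / N ≤ a i}) :
    (∀ᵐ ω ∂μ, ∑ i ∈ Finset.Icc 1 N, Noff (U ω) i = N) ∧
    (∀ i ∈ Finset.Icc 1 N,
      ∫⁻ ω, (Noff (U ω) i : ℝ≥0∞) ∂μ = ENNReal.ofReal (N * W i)) ∧
    (∀ i ∈ Finset.Icc 1 N, ∀ᵐ ω ∂μ, |(Noff (U ω) i : ℝ) - N * W i| < 1) := by
  have hN0 : (0:ℝ) < N := by exact_mod_cast Nat.lt_of_lt_of_le Nat.zero_lt_one hN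
  -- the key formula
  have key : ∀ u i, Noff u i = (⌊(N:ℝ) * a i - u⌋ - ⌊(N:ℝ) * a (i-1) - u⌋).toNat := by
    intro u i
    rw [hNoff]
    have hset : {k : ℤ | a (i - 1) < (u + (k : ℝ)) / N ∧ (u + (k : ℝ)) / N ≤ a i}
        = {k : ℤ | (N:ℝ) * a (i-1) - u < (k:ℝ) ∧ (k:ℝ) ≤ (N:ℝ) * a i - u} := by
      ext k
      simp only [Set.mem_setOf_eq, lt_div_iff₀ hN0, div_le_iff₀ hN0]
      constructor
      · rintro ⟨h1, h2⟩; constructor <;> nlinarith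
      · rintro ⟨h1, h2⟩; constructor <;> nlinarith
    rw [hset, count_Ioc_real]
  -- step property of the cumulative weights
  have hstep : ∀ i, 1 ≤ i → a i = a (i-1) + W i := by
    intro i hi
    obtain ⟨j, rfl⟩ := Nat.exists_eq_add_of_le hi
    have h1 : 1 + j = j + 1 := by omega
    have h2 : 1 + j - 1 = j := by omega
    rw [ha, ha, h1, Nat.add_sub_cancel, Finset.sum_Icc_succ_top (by omega : 1 ≤ j + 1)]
  -- nonnegativity of the integer difference for relevant i
  have hmono : ∀ u, ∀ i ∈ Finset.Icc 1 N,
      ⌊(N:ℝ) * a (i-1) - u⌋ ≤ ⌊(N:ℝ) * a i - u⌋ := by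
    intro u i hi
    simp only [Finset.mem_Icc] at hi
    apply Int.floor_mono
    have h1 : a (i-1) ≤ a i := by
      rw [hstep i hi.1]
      have := hW0 i (Finset.mem_Icc.mpr hi)
      linarith
    nlinarith
  have hcast : ∀ u, ∀ i ∈ Finset.Icc 1 N,
      ((Noff u i : ℤ)) = ⌊(N:ℝ) * a i - u⌋ - ⌊(N:ℝ) * a (i-1) - u⌋ := by
    intro u i hi
    rw [key]
    exact Int.toNat_of_nonneg (by linarith [hmono u i hi])
  -- almost surely U ∈ (0,1)
  have hae : ∀ᵐ ω ∂μ, U ω ∈ Set.Ioo (0:ℝ) 1 := by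
    have h1 : μ (U ⁻¹' Set.Ioo 0 1) = 1 := by
      rw [← Measure.map_apply hU measurableSet_Ioo, hUlaw]
      simp [Measure.restrict_apply, Real.volume_Ioo]
    refine ae_iff.mpr ?_
    have : {ω | ¬ U ω ∈ Set.Ioo (0:ℝ) 1} = (U ⁻¹' Set.Ioo 0 1)ᶜ := rfl
    rw [this, measure_compl (hU measurableSet_Ioo) (measure_ne_top μ _), h1,
      measure_univ, tsub_self]
  -- boundary values of floors
  have hfloorN : ∀ u ∈ Set.Ioo (0:ℝ) 1, ⌊(N:ℝ) * a N - u⌋ = (N:ℤ) - 1 := by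
    intro u hu
    have haN : a N = 1 := by rw [ha, hW1]
    rw [haN, mul_one]
    rw [Int.floor_eq_iff]
    constructor <;> push_cast <;> [linarith [hu.2]; linarith [hu.1]]
  have hfloor0 : ∀ u ∈ Set.Ioo (0:ℝ) 1, ⌊(N:ℝ) * a 0 - u⌋ = -1 := by
    intro u hu
    have ha0 : a 0 = 0 := by rw [ha]; simp
    rw [ha0, mul_zero, zero_sub]
    rw [Int.floor_eq_iff]
    constructor <;> push_cast <;> [linarith [hu.2]; linarith [hu.1]]
  refine ⟨?_, ?_, ?_⟩
  · -- (i) total count equals N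
    filter_upwards [hae] with ω hω
    set u := U ω with hu
    have hsum : ((∑ i ∈ Finset.Icc 1 N, Noff u i : ℕ) : ℤ) = N := by
      push_cast
      rw [Finset.sum_congr rfl (fun i hi => hcast u i hi)]
      have hre : ∑ i ∈ Finset.Icc 1 N,
          (⌊(N:ℝ) * a i - u⌋ - ⌊(N:ℝ) * a (i-1) - u⌋)
          = ∑ j ∈ Finset.range N,
          (⌊(N:ℝ) * a (j+1) - u⌋ - ⌊(N:ℝ) * a j - u⌋) := by
        rw [← Finset.Ico_add_one_right_eq_Icc, Finset.sum_Ico_eq_sum_range]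
        apply Finset.sum_congr (by norm_num)
        intro j _
        rw [show (1 + j - 1 : ℕ) = j from by omega, show (1 + j : ℕ) = j + 1 from by omega]
      rw [hre, Finset.sum_range_sub (f := fun j => ⌊(N:ℝ) * a j - u⌋)]
      rw [hfloorN u hω, hfloor0 u hω]
      ring
    exact_mod_cast hsum
  · -- (ii) expectation
    intro i hi
    simp only [Finset.mem_Icc] at hi
    set x := (N:ℝ) * a (i-1) with hx
    set y := (N:ℝ) * a i with hy
    have hMi : i ∈ Finset.Icc 1 N := Finset.mem_Icc.mpr hi
    have hyx : y - x = N * W i := by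
      rw [hy, hx, hstep i hi.1]; ring
    have hxy : x ≤ y := by
      have := hW0 i hMi
      nlinarith
    have hfun : ∀ u : ℝ, ((Noff u i : ℝ)) = (⌊y - u⌋ : ℝ) - (⌊x - u⌋ : ℝ) := by
      intro u
      have := hcast u i hMi
      have h2 : ((Noff u i : ℤ) : ℝ) = ((⌊(N:ℝ) * a i - u⌋ - ⌊(N:ℝ) * a (i-1) - u⌋ : ℤ) : ℝ) := by
        exact_mod_cast congrArg (fun z : ℤ => (z : ℝ)) this
      push_cast at h2
      rw [hy, hx]
      convert h2 using 3 <;> ring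
    have hmeas : Measurable fun u : ℝ => ((Noff u i : ℕ) : ℝ≥0∞) := by
      have h1 : (fun u : ℝ => ((Noff u i : ℕ) : ℝ≥0∞))
          = (fun k : ℤ => ((k.toNat : ℕ) : ℝ≥0∞)) ∘
            (fun u : ℝ => ⌊y - u⌋ - ⌊x - u⌋) := by
        funext u
        simp only [Function.comp_apply]
        rw [key, hy, hx]
      rw [h1]
      exact measurable_from_top.comp
        ((Int.measurable_floor.comp (measurable_const.sub measurable_id)).sub
          (Int.measurable_floor.comp (measurable_const.sub measurable_id)))
    rw [← lintegral_map hmeas hU, hUlaw]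
    have hinteg : IntegrableOn (fun u : ℝ => (Noff u i : ℝ)) (Set.Ioo 0 1) volume := by
      have hfl : IntervalIntegrable (fun u : ℝ => (⌊y - u⌋ : ℝ) - (⌊x - u⌋ : ℝ))
          volume 0 1 := by
        have h1 : Antitone (fun u : ℝ => (⌊y - u⌋ : ℝ)) := by
          intro s t h
          simp only [Int.cast_le]
          exact Int.floor_mono (by linarith)
        have h2 : Antitone (fun u : ℝ => (⌊x - u⌋ : ℝ)) := by
          intro s t h
          simp only [Int.cast_le]
          exact Int.floor_mono (by linarith)
        exact h1.intervalIntegrable.sub h2.intervalIntegrable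
      have := (intervalIntegrable_iff_integrableOn_Ioo_of_le
        (by norm_num : (0:ℝ) ≤ 1)).mp hfl
      exact this.congr_fun (fun u _ => (hfun u).symm) measurableSet_Ioo
    have hptw : ∀ u : ℝ, ((Noff u i : ℕ) : ℝ≥0∞) = ENNReal.ofReal ((Noff u i : ℝ)) := by
      intro u
      rw [ENNReal.ofReal_natCast]
    calc ∫⁻ u in Set.Ioo (0:ℝ) 1, ((Noff u i : ℕ) : ℝ≥0∞)
        = ∫⁻ u in Set.Ioo (0:ℝ) 1, ENNReal.ofReal ((Noff u i : ℝ)) := by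
          simp_rw [hptw]
      _ = ENNReal.ofReal (∫ u in Set.Ioo (0:ℝ) 1, (Noff u i : ℝ)) := by
          rw [← ofReal_integral_eq_lintegral_ofReal hinteg
            (Filter.Eventually.of_forall fun u => Nat.cast_nonneg _)]
      _ = ENNReal.ofReal ((N:ℝ) * W i) := by
          congr 1
          have heqI : ∫ u in Set.Ioo (0:ℝ) 1, (Noff u i : ℝ)
              = ∫ u in (0:ℝ)..1, ((⌊y - u⌋ : ℝ) - (⌊x - u⌋ : ℝ)) := by
            rw [intervalIntegral.integral_of_le (by norm_num : (0:ℝ) ≤ 1),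
              ← integral_Ioc_eq_integral_Ioo]
            exact setIntegral_congr_fun measurableSet_Ioc (fun u _ => hfun u)
          rw [heqI]
          have h1 : Antitone (fun u : ℝ => (⌊y - u⌋ : ℝ)) := by
            intro s t h
            simp only [Int.cast_le]
            exact Int.floor_mono (by linarith)
          have h2 : Antitone (fun u : ℝ => (⌊x - u⌋ : ℝ)) := by
            intro s t h
            simp only [Int.cast_le]
            exact Int.floor_mono (by linarith)
          rw [intervalIntegral.integral_sub h1.intervalIntegrable h2.intervalIntegrable,
            integral_floor_sub, integral_floor_sub]
          linarith [hyx]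
  · -- (iii) balance
    intro i hi
    refine Filter.Eventually.of_forall fun ω => ?_
    set u := U ω
    set x := (N:ℝ) * a (i-1) with hx
    set y := (N:ℝ) * a i with hy
    simp only [Finset.mem_Icc] at hi
    have hMi : i ∈ Finset.Icc 1 N := Finset.mem_Icc.mpr hi
    have hyx : y - x = N * W i := by
      rw [hy, hx, hstep i hi.1]; ring
    have hfun : ((Noff u i : ℝ)) = (⌊y - u⌋ : ℝ) - (⌊x - u⌋ : ℝ) := by
      have := hcast u i hMi
      have h2 : ((Noff u i : ℤ) : ℝ) = ((⌊(N:ℝ) * a i - u⌋ - ⌊(N:ℝ) * a (i-1) - u⌋ : ℤ) : ℝ) := by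
        exact_mod_cast congrArg (fun z : ℤ => (z : ℝ)) this
      push_cast at h2
      rw [hy, hx]
      convert h2 using 3 <;> ring
    rw [hfun, ← hyx]
    have e1 : (⌊y - u⌋ : ℝ) = (y - u) - Int.fract (y - u) := by
      rw [Int.self_sub_fract]
    have e2 : (⌊x - u⌋ : ℝ) = (x - u) - Int.fract (x - u) := by
      rw [Int.self_sub_fract]
    rw [e1, e2, abs_lt]
    constructor <;>
      [linarith [Int.fract_nonneg (x - u), Int.fract_lt_one (y - u)];
       linarith [Int.fract_nonneg (y - u), Int.fract_lt_one (x - u)]]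
end

section
/- Correctness of the auxiliary particle filter weights: let S be a measurable space, π̂ a probability measure on S, g(y|·) : S → [0,∞) measurable, r : S → (0,∞) measurable, and P, Q Markov kernels on S such that P(·|x') is absolutely continuous with respect to Q(·|x') for every x' ∈ S. Define on S × S the measures μ(d(x',x)) = π̂(dx') r(x') Q(dx|x') and ν(d(x',x)) = π̂(dx') g(y|x) P(dx|x'). Then ν is absolutely continuous with respect to μ, and a version of the Radon–Nikodym derivative is dν/dμ(x', x) = (g(y|x)/r(x')) · (dP(·|x')/dQ(·|x'))(x), where (x',x) ↦ (dP(·|x')/dQ(·|x'))(x) is a jointly measurable version of the kernel Radon–Nikodym derivative. -/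
open MeasureTheory ProbabilityTheory
open scoped ENNReal NNReal

lemma compProd_withDensity_kernel {S : Type*} [MeasurableSpace S]
    (piHat : Measure S) [IsProbabilityMeasure piHat]
    (P Q : Kernel S S) [IsMarkovKernel P] [IsMarkovKernel Q]
    (dPQ : S → S → ℝ≥0∞) (hdm : Measurable (Function.uncurry dPQ))
    (hd : ∀ x', P x' = (Q x').withDensity (dPQ x')) :
    piHat.compProd P = (piHat.compProd Q).withDensity fun z => dPQ z.1 z.2 := by
  have hdm' : Measurable fun z : S × S => dPQ z.1 z.2 := hdm
  ext s hs
  rw [Measure.compProd_apply hs, withDensity_apply _ hs,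
    ← lintegral_indicator hs _, Measure.lintegral_compProd (hdm'.indicator hs)]
  refine lintegral_congr fun x' => ?_
  rw [hd x', withDensity_apply _ (measurable_prodMk_left hs),
    ← lintegral_indicator (measurable_prodMk_left hs) _]
  refine lintegral_congr fun x => ?_
  by_cases hx : (x', x) ∈ s <;> simp [Set.indicator_apply, hx, Set.mem_preimage]

/-- **Correctness of the auxiliary particle filter weights.** With proposal
measure `μ(d(x',x)) = π̂(dx') r(x') Q(dx|x')` and target measure
`ν(d(x',x)) = π̂(dx') g(y|x) P(dx|x')` on `S × S`, where `P(·|x') ≪ Q(·|x')`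
with jointly measurable kernel density `dPQ`, the target is absolutely
continuous with respect to the proposal with Radon–Nikodym density
`(x',x) ↦ (g(y|x)/r(x')) · (dP(·|x')/dQ(·|x'))(x)`. -/
theorem auxiliary_particle_filter_weights {S : Type*} [MeasurableSpace S]
    (piHat : Measure S) [IsProbabilityMeasure piHat]
    (g : S → ℝ) (hg0 : ∀ x, 0 ≤ g x) (hgm : Measurable g)
    (r : S → ℝ) (hr : ∀ x, 0 < r x) (hrm : Measurable r)
    (P Q : Kernel S S) [IsMarkovKernel P] [IsMarkovKernel Q]
    (hac : ∀ x', P x' ≪ Q x')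
    (dPQ : S → S → ℝ≥0∞) (hdm : Measurable (Function.uncurry dPQ))
    (hd : ∀ x', P x' = (Q x').withDensity (dPQ x'))
    (μ ν : Measure (S × S))
    (hμ : μ = (piHat.compProd Q).withDensity fun z => ENNReal.ofReal (r z.1))
    (hν : ν = (piHat.compProd P).withDensity fun z => ENNReal.ofReal (g z.2)) :
    ν ≪ μ ∧
      ν = μ.withDensity fun z => ENNReal.ofReal (g z.2 / r z.1) * dPQ z.1 z.2 := by
  have hdm' : Measurable fun z : S × S => dPQ z.1 z.2 := hdm
  have hg2 : Measurable fun z : S × S => ENNReal.ofReal (g z.2) :=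
    (hgm.comp measurable_snd).ennreal_ofReal
  have hr2 : Measurable fun z : S × S => ENNReal.ofReal (r z.1) :=
    (hrm.comp measurable_fst).ennreal_ofReal
  have hgr : Measurable fun z : S × S => ENNReal.ofReal (g z.2 / r z.1) * dPQ z.1 z.2 :=
    (((hgm.comp measurable_snd).div (hrm.comp measurable_fst)).ennreal_ofReal).mul hdm'
  have key : ν = μ.withDensity fun z => ENNReal.ofReal (g z.2 / r z.1) * dPQ z.1 z.2 := by
    rw [hν, hμ, compProd_withDensity_kernel piHat P Q dPQ hdm hd,
      ← withDensity_mul _ hdm' hg2, ← withDensity_mul _ hr2 hgr]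
    refine withDensity_congr_ae (Filter.Eventually.of_forall fun z => ?_)
    have hrz := hr z.1
    have h1 : r z.1 * (g z.2 / r z.1) = g z.2 := by field_simp
    simp only [Pi.mul_apply]
    rw [← mul_assoc, ← ENNReal.ofReal_mul hrz.le, h1, mul_comm]
  exact ⟨key ▸ withDensity_absolutelyContinuous μ _, key⟩
end

section
/- One-step conditional unbiasedness of the auxiliary particle filter likelihood estimate: let S be a measurable space, g(y|·) : S → [0,∞) measurable, r : S → (0,∞) measurable, P, Q Markov kernels on S with P(·|x') absolutely continuous with respect to Q(·|x') for all x', points x¹,…,x^N ∈ S, and weights W¹,…,W^N ≥ 0 with ∑_k W^k = 1. Set c := ∑_{k=1}^N W^k r(x^k), assumed in (0,∞), and W^{*k} := W^k r(x^k)/c. Let I¹,…,I^N be i.i.d. with ℙ(I^i = k) = W^{*k}, and conditionally on the indices let X¹,…,X^N be independent with X^i ~ Q(·|x^{I^i}); define w^i := g(y|X^i) r(x^{I^i})^{-1} (dP(·|x^{I^i})/dQ(·|x^{I^i}))(X^i). Then 𝔼[ ((1/N) ∑_{i=1}^N w^i) · c ] = ∑_{k=1}^N W^k ∫ g(y|x)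 P(dx|x^k), as an identity in [0,∞]. -/
/-!
Each of the `N` summands has the same expectation, since the pair `(Iⁱ, Xⁱ)` has
law `W* ⊗ Q(·|x^·)` whatever the other coordinates do. Against `Q(·|xᵏ)` the density
`dP/dQ` turns the integral of `g/r(xᵏ)` into `r(xᵏ)⁻¹ ∫ g dP(·|xᵏ)`, and the factor
`r(xᵏ)⁻¹` cancels the reweighting `W*ᵏ = Wᵏ r(xᵏ)/c`, so the expectation is
`c⁻¹ ∑ₖ Wᵏ ∫ g dP(·|xᵏ)`.
-/

open MeasureTheory ProbabilityTheory
open scoped ENNReal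

section TwoStageSampling

variable {ι κ S : Type*} [Countable κ] [MeasurableSpace κ]
  [MeasurableSingletonClass κ] [MeasurableSpace S]

theorem measurable_uncurry_comp_eval_prod {f : κ → S → ℝ≥0∞} (hf : ∀ k, Measurable (f k))
    (i : ι) : Measurable fun z : (ι → κ) × (ι → S) => f (z.1 i) (z.2 i) :=
  (measurable_from_prod_countable_right (f := Function.uncurry f) hf).comp
    (f := fun z : (ι → κ) × (ι → S) => (z.1 i, z.2 i)) (by fun_prop)

theorem lintegral_bind_pi_map_prodMk_comp_eval [Fintype ι] (m : Measure κ)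
    [IsProbabilityMeasure m] (μ : κ → Measure S) [∀ k, IsProbabilityMeasure (μ k)]
    {f : κ → S → ℝ≥0∞} (hf : ∀ k, Measurable (f k)) (i : ι) :
    ∫⁻ z, f (z.1 i) (z.2 i) ∂((Measure.pi fun _ : ι => m).bind
        fun I => (Measure.pi fun j => μ (I j)).map (fun X => (I, X))) =
      ∫⁻ k, ∫⁻ s, f k s ∂(μ k) ∂m := by
  have hfz := measurable_uncurry_comp_eval_prod (ι := ι) hf i
  rw [Measure.lintegral_bind (measurable_of_countable _).aemeasurable hfz.aemeasurable]
  simp_rw [lintegral_map hfz measurable_prodMk_left]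
  have hinner : ∀ I : ι → κ, ∫⁻ X, f (I i) (X i) ∂(Measure.pi fun j => μ (I j)) =
      ∫⁻ s, f (I i) s ∂(μ (I i)) := fun I =>
    (measurePreserving_eval (fun j => μ (I j)) i).lintegral_comp (hf _)
  simp_rw [hinner]
  exact (measurePreserving_eval (fun _ : ι => m) i).lintegral_comp
    (f := fun k => ∫⁻ s, f k s ∂(μ k)) (measurable_of_countable _)

theorem lintegral_bind_pi_map_prodMk_sum_comp_eval [Fintype ι] (m : Measure κ)
    [IsProbabilityMeasure m] (μ : κ → Measure S) [∀ k, IsProbabilityMeasure (μ k)]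
    {f : κ → S → ℝ≥0∞} (hf : ∀ k, Measurable (f k)) :
    ∫⁻ z, ∑ i, f (z.1 i) (z.2 i) ∂((Measure.pi fun _ : ι => m).bind
        fun I => (Measure.pi fun j => μ (I j)).map (fun X => (I, X))) =
      Fintype.card ι * ∫⁻ k, ∫⁻ s, f k s ∂(μ k) ∂m := by
  rw [lintegral_finsetSum _ fun i _ => measurable_uncurry_comp_eval_prod hf i]
  simp_rw [lintegral_bind_pi_map_prodMk_comp_eval m μ hf]
  rw [Finset.sum_const, Finset.card_univ, nsmul_eq_mul]

end TwoStageSampling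

theorem lintegral_sum_smul_dirac {κ : Type*} [Fintype κ] [MeasurableSpace κ]
    [MeasurableSingletonClass κ] (p : κ → ℝ≥0∞) (φ : κ → ℝ≥0∞) :
    ∫⁻ k, φ k ∂(∑ k, p k • Measure.dirac k) = ∑ k, p k * φ k := by
  simp [lintegral_dirac]

theorem isProbabilityMeasure_sum_ofReal_smul_dirac {κ : Type*} [Fintype κ]
    [MeasurableSpace κ] {p : κ → ℝ} (hp0 : ∀ k, 0 ≤ p k) (hp1 : ∑ k, p k = 1) :
    IsProbabilityMeasure (∑ k, ENNReal.ofReal (p k) • Measure.dirac k) := by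
  constructor
  simp [← ENNReal.ofReal_sum_of_nonneg fun k _ => hp0 k, hp1]

theorem lintegral_div_mul_eq_inv_mul_lintegral_withDensity {S : Type*} [MeasurableSpace S]
    {μ : Measure S} {g d : S → ℝ≥0∞} (hg : Measurable g) (hd : Measurable d)
    (a : ℝ≥0∞) :
    ∫⁻ s, g s / a * d s ∂μ = a⁻¹ * ∫⁻ s, g s ∂(μ.withDensity d) := by
  rw [lintegral_withDensity_eq_lintegral_mul _ hd hg, ← lintegral_const_mul _ (hd.mul hg)]
  congr 1 with s
  simp only [Pi.mul_apply, div_eq_mul_inv]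
  ring

theorem ENNReal.ofReal_mul_ofReal_mul_div_mul_inv_ofReal {w r c : ℝ} (hr : 0 < r)
    (hc : 0 < c) :
    ENNReal.ofReal c * ENNReal.ofReal (w * r / c) * (ENNReal.ofReal r)⁻¹ = ENNReal.ofReal w := by
  rw [← ENNReal.ofReal_mul hc.le, mul_div_cancel₀ _ hc.ne', ENNReal.ofReal_mul' hr.le,
    ENNReal.mul_inv_cancel_right (by simpa using hr) ENNReal.ofReal_ne_top]

theorem auxiliary_filter_one_step_unbiased_general {S : Type*} [MeasurableSpace S]
    (P Q : Kernel S S) [IsMarkovKernel Q]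
    (g : S → ℝ) (hgm : Measurable g)
    (r : S → ℝ) (hr : ∀ x, 0 < r x)
    (dPQ : S → S → ℝ≥0∞) (hdm : Measurable (Function.uncurry dPQ))
    (hd : ∀ x', P x' = (Q x').withDensity (dPQ x'))
    (N : ℕ) (x : Fin N → S) (W : Fin N → ℝ)
    (hW0 : ∀ k, 0 ≤ W k)
    (c : ℝ) (hc : c = ∑ k, W k * r (x k)) (hc0 : 0 < c)
    (Wstar : Fin N → ℝ) (hWstar : ∀ k, Wstar k = W k * r (x k) / c)
    (ν : Measure ((Fin N → Fin N) × (Fin N → S)))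
    (hν : ν = (Measure.pi fun _ : Fin N =>
          ∑ k, ENNReal.ofReal (Wstar k) • Measure.dirac k).bind
        (fun I => (Measure.pi fun i : Fin N => Q (x (I i))).map (fun X => (I, X)))) :
    ∫⁻ z, ((N : ℝ≥0∞)⁻¹ * ∑ i, ENNReal.ofReal (g (z.2 i)) /
          ENNReal.ofReal (r (x (z.1 i))) * dPQ (x (z.1 i)) (z.2 i)) *
        ENNReal.ofReal c ∂ν =
      ∑ k, ENNReal.ofReal (W k) * ∫⁻ s, ENNReal.ofReal (g s) ∂(P (x k)) := by
  rcases N.eq_zero_or_pos with rfl | hN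
  · simp
  have hWstar0 : ∀ k, 0 ≤ Wstar k := fun k => by
    rw [hWstar]; have := hr (x k); have := hW0 k; positivity
  have hWstar1 : ∑ k, Wstar k = 1 := by
    simp only [hWstar, ← Finset.sum_div, ← hc, div_self hc0.ne']
  have := isProbabilityMeasure_sum_ofReal_smul_dirac hWstar0 hWstar1
  have hweight : ∀ k, ∫⁻ s, ENNReal.ofReal (g s) / ENNReal.ofReal (r (x k)) * dPQ (x k) s
      ∂(Q (x k)) = (ENNReal.ofReal (r (x k)))⁻¹ * ∫⁻ s, ENNReal.ofReal (g s) ∂(P (x k)) :=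
    fun k => by
      rw [hd, lintegral_div_mul_eq_inv_mul_lintegral_withDensity hgm.ennreal_ofReal
        (hdm.of_uncurry_left)]
  rw [hν, lintegral_mul_const' _ _ ENNReal.ofReal_ne_top,
    lintegral_const_mul' _ _ (by simpa using hN.ne'),
    lintegral_bind_pi_map_prodMk_sum_comp_eval (f := fun k s => ENNReal.ofReal (g s) /
      ENNReal.ofReal (r (x k)) * dPQ (x k) s) _ (fun k => Q (x k))
      fun k => (hgm.ennreal_ofReal.div_const _).mul hdm.of_uncurry_left,
    lintegral_sum_smul_dirac, Fintype.card_fin, ← mul_assoc,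
    ENNReal.inv_mul_cancel (by simpa using hN.ne') (ENNReal.natCast_ne_top N), one_mul,
    Finset.sum_mul]
  refine Finset.sum_congr rfl fun k _ => ?_
  rw [hweight, hWstar,
    ← ENNReal.ofReal_mul_ofReal_mul_div_mul_inv_ofReal (w := W k) (hr (x k)) hc0]
  ring

/-- **One-step conditional unbiasedness of the auxiliary particle filter
likelihood estimate.** With reweighting function `r > 0`, proposal kernel `Q`
with `P(·|x') ≪ Q(·|x')` with jointly measurable density `dPQ`, auxiliary
weights `W*ᵏ = Wᵏ r(xᵏ)/c` where `c = ∑ₖ Wᵏ r(xᵏ)`, indices `I¹,…,I^N` i.i.d.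
with `ℙ(Iⁱ = k) = W*ᵏ` and, conditionally independently, `Xⁱ ~ Q(·|x^{Iⁱ})`,
the importance weights `wⁱ = g(y|Xⁱ) r(x^{Iⁱ})⁻¹ (dP/dQ)(x^{Iⁱ}, Xⁱ)` satisfy
`𝔼[((1/N)∑ᵢ wⁱ)·c] = ∑ₖ Wᵏ ∫ g(y|x) P(dx|xᵏ)`, as an identity in `[0,∞]`. -/
theorem auxiliary_filter_one_step_unbiased {S : Type*} [MeasurableSpace S]
    (P Q : Kernel S S) [IsMarkovKernel P] [IsMarkovKernel Q]
    (g : S → ℝ) (hg0 : ∀ x, 0 ≤ g x) (hgm : Measurable g)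
    (r : S → ℝ) (hr : ∀ x, 0 < r x) (hrm : Measurable r)
    (hac : ∀ x', P x' ≪ Q x')
    (dPQ : S → S → ℝ≥0∞) (hdm : Measurable (Function.uncurry dPQ))
    (hd : ∀ x', P x' = (Q x').withDensity (dPQ x'))
    (N : ℕ) (x : Fin N → S) (W : Fin N → ℝ)
    (hW0 : ∀ k, 0 ≤ W k) (hW1 : ∑ k, W k = 1)
    (c : ℝ) (hc : c = ∑ k, W k * r (x k)) (hc0 : 0 < c)
    (Wstar : Fin N → ℝ) (hWstar : ∀ k, Wstar k = W k * r (x k) / c)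
    (ν : Measure ((Fin N → Fin N) × (Fin N → S)))
    (hν : ν = (Measure.pi fun _ : Fin N =>
          ∑ k, ENNReal.ofReal (Wstar k) • Measure.dirac k).bind
        (fun I => (Measure.pi fun i : Fin N => Q (x (I i))).map (fun X => (I, X)))) :
    ∫⁻ z, ((N : ℝ≥0∞)⁻¹ * ∑ i, ENNReal.ofReal (g (z.2 i)) /
          ENNReal.ofReal (r (x (z.1 i))) * dPQ (x (z.1 i)) (z.2 i)) *
        ENNReal.ofReal c ∂ν =
      ∑ k, ENNReal.ofReal (W k) * ∫⁻ s, ENNReal.ofReal (g s) ∂(P (x k)) :=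
  auxiliary_filter_one_step_unbiased_general P Q g hgm r hr dPQ hdm hd N x W hW0 c hc hc0 Wstar
    hWstar ν hν
end

section
/- Pseudo-marginal Metropolis–Hastings targets the exact posterior: let Θ be a measurable space with σ-finite measure λ, π a probability measure on Θ with density f with respect to λ, and M a Markov kernel from Θ to [0,∞) such that ∫ w M(θ, dw) = 1 for every θ (unbiased nonnegative likelihood estimates). Then (i) π̃(dθ, dw) := w · π(dθ) M(θ, dw) is a probability measure on Θ × [0,∞) whose Θ-marginal is π; and (ii) if q(θ'|θ) is a jointly measurable Markov transition density with respect to λ, the Metropolis–Hastings kernel on Θ × [0,∞) which from state (θ, w) proposes (θ', w') from q(θ'|θ) λ(dθ') M(θ', dw') and accepts with probability min{1, (f(θ') w' q(θ|θ'))/(f(θ) w q(θ'|θ))} (accepting with probability 1 when the denominator is 0) is reversible with respect to π̃; in particular π̃ is an invariant distribution of this kernel for every choice of M. -/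
open MeasureTheory ProbabilityTheory
open scoped ENNReal NNReal

/-!
With `ν := λ ⊗ M` on `Θ × ℝ≥0`, the extended target `π̃` has density `ρ(θ, w) = f(θ) w` and the
proposal from `z = (θ, w)` has density `Q(z, (θ', w')) = q(θ'|θ)`, both with respect to `ν`. So
the pseudo-marginal kernel is an ordinary Metropolis–Hastings kernel on `Θ × ℝ≥0` whose
acceptance probability is `min{1, ρ(z')Q(z', z) / ρ(z)Q(z, z')}`, and detailed balance holds
because `ρ(z)Q(z, z')α(z, z') = min{ρ(z)Q(z, z'), ρ(z')Q(z', z)}` is symmetric in `z, z'`.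
Unbiasedness of the estimates, `∫ w M(θ, dw) = 1`, is exactly what makes the `θ`-marginal of `π̃`
equal to `π`. Reversibility says that the law of a step `(Z, Z')` from `π̃` is invariant under
swapping, which gives both the identity for bounded test functions and invariance.
-/

noncomputable def mhAcceptance (a b : ℝ) : ℝ≥0∞ :=
  if a = 0 then 1 else min 1 (ENNReal.ofReal (b / a))

lemma mhAcceptance_le_one (a b : ℝ) : mhAcceptance a b ≤ 1 := by
  unfold mhAcceptance
  split_ifs
  exacts [le_rfl, min_le_left _ _]

lemma measurable_mhAcceptance : Measurable (Function.uncurry mhAcceptance) :=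
  Measurable.ite (measurable_fst (measurableSet_singleton 0)) measurable_const
    (measurable_const.min (measurable_snd.div measurable_fst).ennreal_ofReal)

lemma measurable_mhAcceptance_swap {X : Type*} [MeasurableSpace X] {w : X → X → ℝ}
    (hw : Measurable (Function.uncurry w)) :
    Measurable (Function.uncurry fun x y ↦ mhAcceptance (w x y) (w y x)) :=
  measurable_mhAcceptance.comp (hw.prodMk (hw.comp measurable_swap))

lemma ofReal_mul_mhAcceptance {a b : ℝ} (ha : 0 ≤ a) (hb : 0 ≤ b) :
    ENNReal.ofReal a * mhAcceptance a b = ENNReal.ofReal (min a b) := by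
  unfold mhAcceptance
  split_ifs with h
  · simp [h, hb]
  · rw [← ENNReal.ofReal_one, ← ENNReal.ofReal_min, ← ENNReal.ofReal_mul ha,
      mul_min_of_nonneg _ _ ha, mul_one, mul_div_cancel₀ _ h]

lemma ofReal_mul_mhAcceptance_comm {a b : ℝ} (ha : 0 ≤ a) (hb : 0 ≤ b) :
    ENNReal.ofReal a * mhAcceptance a b = ENNReal.ofReal b * mhAcceptance b a := by
  rw [ofReal_mul_mhAcceptance ha hb, ofReal_mul_mhAcceptance hb ha, min_comm]

namespace MeasureTheory.Measure

variable {α β : Type*} {mα : MeasurableSpace α} {mβ : MeasurableSpace β}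
  {μ : Measure α} {κ : Kernel α β}

lemma withDensity_compProd [SFinite μ] [IsSFiniteKernel κ] {f : α → ℝ≥0∞} (hf : Measurable f) :
    μ.withDensity f ⊗ₘ κ = (μ ⊗ₘ κ).withDensity (fun p ↦ f p.1) := by
  ext s hs
  rw [compProd_apply hs, withDensity_apply _ hs, lintegral_withDensity_eq_lintegral_mul _ hf
    (κ.measurable_kernel_prodMk_left hs), ← lintegral_indicator hs,
    lintegral_compProd (f := s.indicator fun p ↦ f p.1)
      ((hf.comp measurable_fst).indicator hs)]
  congr with a
  rw [Pi.mul_apply, ← lintegral_indicator_const (measurable_prodMk_left hs)]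
  rfl

lemma map_fst_withDensity_compProd [SFinite μ] [IsSFiniteKernel κ] {g : α × β → ℝ≥0∞}
    (hg : Measurable g) (hg1 : ∀ a, ∫⁻ b, g (a, b) ∂κ a = 1) :
    ((μ ⊗ₘ κ).withDensity g).map Prod.fst = μ := by
  ext s hs
  rw [map_apply measurable_fst hs, withDensity_apply _ (measurable_fst hs), ← Set.prod_univ,
    setLIntegral_compProd hg hs .univ]
  simp [hg1]

end MeasureTheory.Measure

namespace ProbabilityTheory

variable {X : Type*} [MeasurableSpace X]

lemma integral_mul_integral_eq_integral_compProd {Y : Type*} [MeasurableSpace Y]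
    {κ : Kernel X Y} [IsMarkovKernel κ] {μ : Measure X} [IsFiniteMeasure μ] {φ : X → ℝ}
    {ψ : Y → ℝ} (hφ : Measurable φ) (hψ : Measurable ψ) {Cφ Cψ : ℝ} (hCφ : ∀ x, |φ x| ≤ Cφ)
    (hCψ : ∀ y, |ψ y| ≤ Cψ) :
    ∫ x, φ x * ∫ y, ψ y ∂κ x ∂μ = ∫ p, φ p.1 * ψ p.2 ∂(μ ⊗ₘ κ) := by
  have hint : Integrable (fun p : X × Y ↦ φ p.1 * ψ p.2) (μ ⊗ₘ κ) :=
    .of_bound ((hφ.comp measurable_fst).mul (hψ.comp measurable_snd)).aestronglyMeasurable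
      (Cφ * Cψ) (ae_of_all _ fun p ↦ by
        rw [norm_mul, Real.norm_eq_abs, Real.norm_eq_abs]
        exact mul_le_mul (hCφ _) (hCψ _) (abs_nonneg _) ((abs_nonneg _).trans (hCφ p.1)))
  simp_rw [Measure.integral_compProd hint, integral_const_mul]

namespace Kernel.IsReversible

variable {κ : Kernel X X} {μ : Measure X}

lemma map_swap_compProd [IsFiniteMeasure μ] [IsFiniteKernel κ] (h : κ.IsReversible μ) :
    (μ ⊗ₘ κ).map Prod.swap = μ ⊗ₘ κ := by
  refine Measure.ext_prod fun {A B} hA hB ↦ ?_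
  rw [Measure.map_apply measurable_swap (hA.prod hB), Set.preimage_swap_prod,
    Measure.compProd_apply_prod hA hB, Measure.compProd_apply_prod hB hA, h hB hA]

lemma integral_mul_integral_comm [IsFiniteMeasure μ] [IsMarkovKernel κ] (h : κ.IsReversible μ)
    {φ ψ : X → ℝ} (hφ : Measurable φ) (hψ : Measurable ψ) {Cφ Cψ : ℝ}
    (hCφ : ∀ z, |φ z| ≤ Cφ) (hCψ : ∀ z, |ψ z| ≤ Cψ) :
    ∫ z, φ z * ∫ z', ψ z' ∂κ z ∂μ = ∫ z, ψ z * ∫ z', φ z' ∂κ z ∂μ := by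
  rw [integral_mul_integral_eq_integral_compProd hφ hψ hCφ hCψ,
    integral_mul_integral_eq_integral_compProd hψ hφ hCψ hCφ]
  conv_lhs => rw [← h.map_swap_compProd]
  rw [integral_map measurable_swap.aemeasurable (by fun_prop)]
  simp_rw [Prod.fst_swap, Prod.snd_swap, mul_comm (φ _)]

lemma lintegral_apply [IsMarkovKernel κ] (h : κ.IsReversible μ) {B : Set X}
    (hB : MeasurableSet B) : ∫⁻ z, κ z B ∂μ = μ B := by
  rw [← Measure.bind_apply hB κ.aemeasurable, h.invariant.def]

end Kernel.IsReversible

noncomputable def metropolisHastings (P : X → Measure X) (α : X → X → ℝ≥0∞) (z : X) :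
    Measure X :=
  (P z).withDensity (α z) + (1 - ∫⁻ z', α z z' ∂P z) • Measure.dirac z

lemma metropolisHastings_apply (P : X → Measure X) (α : X → X → ℝ≥0∞) (z : X) {B : Set X}
    (hB : MeasurableSet B) :
    metropolisHastings P α z B =
      ∫⁻ z' in B, α z z' ∂P z + (1 - ∫⁻ z', α z z' ∂P z) * B.indicator 1 z := by
  simp [metropolisHastings, withDensity_apply _ hB, Measure.dirac_apply' _ hB]

lemma isProbabilityMeasure_metropolisHastings {P : X → Measure X} {α : X → X → ℝ≥0∞} (z : X)
    [IsProbabilityMeasure (P z)] (hα : ∀ z', α z z' ≤ 1) :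
    IsProbabilityMeasure (metropolisHastings P α z) := by
  have h : ∫⁻ z', α z z' ∂P z ≤ 1 :=
    (lintegral_mono hα).trans_eq (by rw [lintegral_const, measure_univ, one_mul])
  constructor
  rw [metropolisHastings_apply P α z .univ, setLIntegral_univ, Set.indicator_univ, Pi.one_apply,
    mul_one, add_tsub_cancel_of_le h]

variable (ν : Measure X) {Q α : X → X → ℝ≥0∞}

lemma metropolisHastings_withDensity_apply (hQ : Measurable (Function.uncurry Q))
    (hα : Measurable (Function.uncurry α)) (z : X) {B : Set X} (hB : MeasurableSet B) :
    metropolisHastings (fun z ↦ ν.withDensity (Q z)) α z B =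
      ∫⁻ z' in B, Q z z' * α z z' ∂ν + (1 - ∫⁻ z', Q z z' * α z z' ∂ν) * B.indicator 1 z := by
  rw [metropolisHastings_apply _ _ _ hB,
    setLIntegral_withDensity_eq_setLIntegral_mul _ hQ.of_uncurry_left hα.of_uncurry_left hB,
    lintegral_withDensity_eq_lintegral_mul _ hQ.of_uncurry_left hα.of_uncurry_left]
  rfl

lemma measurable_metropolisHastings_withDensity [SFinite ν] (hQ : Measurable (Function.uncurry Q))
    (hα : Measurable (Function.uncurry α)) :
    Measurable (metropolisHastings (fun z ↦ ν.withDensity (Q z)) α) := by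
  refine Measure.measurable_of_measurable_coe _ fun B hB ↦ ?_
  simp_rw [metropolisHastings_withDensity_apply ν hQ hα _ hB]
  exact ((hQ.mul hα).lintegral_prod_right').add
    ((measurable_const.sub (hQ.mul hα).lintegral_prod_right').mul
      (measurable_one.indicator hB))

noncomputable def metropolisHastingsKernel [SFinite ν] (hQ : Measurable (Function.uncurry Q))
    (hα : Measurable (Function.uncurry α)) : Kernel X X :=
  ⟨metropolisHastings (fun z ↦ ν.withDensity (Q z)) α,
    measurable_metropolisHastings_withDensity ν hQ hα⟩

lemma metropolisHastingsKernel_apply [SFinite ν] (hQ : Measurable (Function.uncurry Q))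
    (hα : Measurable (Function.uncurry α)) (z : X) :
    metropolisHastingsKernel ν hQ hα z = metropolisHastings (fun z ↦ ν.withDensity (Q z)) α z :=
  rfl

lemma isMarkovKernel_metropolisHastingsKernel [SFinite ν] (hQ : Measurable (Function.uncurry Q))
    (hα : Measurable (Function.uncurry α)) (hQ1 : ∀ z, ∫⁻ z', Q z z' ∂ν = 1)
    (hα1 : ∀ z z', α z z' ≤ 1) :
    IsMarkovKernel (metropolisHastingsKernel ν hQ hα) where
  isProbabilityMeasure z := by
    rw [metropolisHastingsKernel_apply]
    have : IsProbabilityMeasure (ν.withDensity (Q z)) :=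
      ⟨by rw [withDensity_apply _ .univ, setLIntegral_univ, hQ1]⟩
    exact isProbabilityMeasure_metropolisHastings z (hα1 z)

lemma setLIntegral_metropolisHastingsKernel_withDensity [SFinite ν] {ρ : X → ℝ≥0∞}
    (hρ : Measurable ρ) (hQ : Measurable (Function.uncurry Q))
    (hα : Measurable (Function.uncurry α)) {A B : Set X} (hA : MeasurableSet A)
    (hB : MeasurableSet B) :
    ∫⁻ x in A, metropolisHastingsKernel ν hQ hα x B ∂ν.withDensity ρ =
      ∫⁻ x in A, ∫⁻ y in B, ρ x * Q x y * α x y ∂ν ∂ν +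
        ∫⁻ x in A ∩ B, ρ x * (1 - ∫⁻ y, Q x y * α x y ∂ν) ∂ν := by
  have hstay : Measurable fun x ↦ ρ x * (1 - ∫⁻ y, Q x y * α x y ∂ν) :=
    hρ.mul (measurable_const.sub (hQ.mul hα).lintegral_prod_right')
  have hsplit : ∀ x, ρ x * metropolisHastingsKernel ν hQ hα x B =
      ∫⁻ y in B, ρ x * Q x y * α x y ∂ν +
        B.indicator (fun x ↦ ρ x * (1 - ∫⁻ y, Q x y * α x y ∂ν)) x := by
    intro x
    have hQα : Measurable fun y ↦ Q x y * α x y := hQ.of_uncurry_left.mul hα.of_uncurry_left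
    rw [metropolisHastingsKernel_apply, metropolisHastings_withDensity_apply ν hQ hα x hB, mul_add,
      ← lintegral_const_mul _ hQα]
    simp only [mul_assoc]
    by_cases hx : x ∈ B <;> simp [hx]
  rw [setLIntegral_withDensity_eq_setLIntegral_mul _ hρ
      ((metropolisHastingsKernel ν hQ hα).measurable_coe hB) hA, Pi.mul_def]
  simp_rw [hsplit]
  rw [lintegral_add_right _ (hstay.indicator hB),
    setLIntegral_indicator hB, Set.inter_comm]

lemma isReversible_metropolisHastingsKernel [SFinite ν] {ρ : X → ℝ≥0∞}
    (hρ : Measurable ρ) (hQ : Measurable (Function.uncurry Q))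
    (hα : Measurable (Function.uncurry α))
    (hbalance : ∀ x y, ρ x * Q x y * α x y = ρ y * Q y x * α y x) :
    (metropolisHastingsKernel ν hQ hα).IsReversible (ν.withDensity ρ) := by
  intro A B hA hB
  have hG : Measurable (Function.uncurry fun x y ↦ ρ x * Q x y * α x y) :=
    ((hρ.comp measurable_fst).mul hQ).mul hα
  rw [setLIntegral_metropolisHastingsKernel_withDensity ν hρ hQ hα hA hB,
    setLIntegral_metropolisHastingsKernel_withDensity ν hρ hQ hα hB hA,
    lintegral_lintegral_swap hG.aemeasurable, Set.inter_comm]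
  simp_rw [hbalance]

lemma isReversible_metropolisHastingsKernel_mhAcceptance [SFinite ν] {ρ : X → ℝ≥0∞}
    {w : X → X → ℝ} (hρ : Measurable ρ) (hQ : Measurable (Function.uncurry Q))
    (hw : Measurable (Function.uncurry w)) (hw0 : ∀ x y, 0 ≤ w x y)
    (hρQ : ∀ x y, ρ x * Q x y = ENNReal.ofReal (w x y)) :
    (metropolisHastingsKernel ν hQ (measurable_mhAcceptance_swap hw)).IsReversible
      (ν.withDensity ρ) :=
  isReversible_metropolisHastingsKernel ν hρ hQ _ fun x y ↦ by
    rw [hρQ, hρQ]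
    exact ofReal_mul_mhAcceptance_comm (hw0 x y) (hw0 y x)

end ProbabilityTheory

/-- **Pseudo-marginal Metropolis–Hastings targets the exact posterior.**
Let `π` have density `f` w.r.t. a σ-finite measure `λ` on `Θ`, and let
`M` be a Markov kernel of nonnegative unbiased likelihood estimates
(`∫ w M(θ, dw) = 1` for all `θ`). Then (i) `π̃(dθ, dw) = w π(dθ) M(θ, dw)` is a
probability measure with `Θ`-marginal `π`; (ii) the Metropolis–Hastings kernel
`K` which from `(θ, w)` proposes `(θ', w') ~ q(θ'|θ) λ(dθ') M(θ', dw')` and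
accepts with probability `min{1, f(θ')w'q(θ|θ') / (f(θ)wq(θ'|θ))}` (accepting
with probability `1` when the denominator vanishes) is reversible with respect
to `π̃`; in particular `π̃` is invariant for `K`. -/
theorem pseudo_marginal_MH_exact {Θ : Type*} [MeasurableSpace Θ]
    (lam : Measure Θ) [SigmaFinite lam]
    (f : Θ → ℝ) (hf0 : ∀ θ, 0 ≤ f θ) (hfm : Measurable f)
    (π : Measure Θ) [IsProbabilityMeasure π]
    (hπ : π = lam.withDensity fun θ => ENNReal.ofReal (f θ))
    (M : Kernel Θ ℝ≥0) [IsMarkovKernel M]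
    (hM : ∀ θ, ∫⁻ w, (w : ℝ≥0∞) ∂(M θ) = 1)
    (q : Θ → Θ → ℝ) (hq0 : ∀ θ θ', 0 ≤ q θ θ') (hqm : Measurable (Function.uncurry q))
    (hq1 : ∀ θ, ∫⁻ θ', ENNReal.ofReal (q θ θ') ∂lam = 1)
    (πt : Measure (Θ × ℝ≥0))
    (hπt : πt = (π.compProd M).withDensity fun z => (z.2 : ℝ≥0∞))
    (α : Θ × ℝ≥0 → Θ × ℝ≥0 → ℝ≥0∞)
    (hα : α = fun z z' =>
      if f z.1 * (z.2 : ℝ) * q z.1 z'.1 = 0 then 1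
      else min 1 (ENNReal.ofReal
        ((f z'.1 * (z'.2 : ℝ) * q z'.1 z.1) / (f z.1 * (z.2 : ℝ) * q z.1 z'.1))))
    (prop : Θ × ℝ≥0 → Measure (Θ × ℝ≥0))
    (hprop : prop = fun z => (lam.withDensity fun θ' => ENNReal.ofReal (q z.1 θ')).compProd M)
    (K : Θ × ℝ≥0 → Measure (Θ × ℝ≥0))
    (hK : K = fun z => (prop z).withDensity (α z) +
      (1 - ∫⁻ z', α z z' ∂(prop z)) • Measure.dirac z) :
    IsProbabilityMeasure πt ∧
    πt.map Prod.fst = π ∧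
    (∀ φ ψ : Θ × ℝ≥0 → ℝ, Measurable φ → Measurable ψ →
      (∀ Cφ Cψ : ℝ, (∀ z, |φ z| ≤ Cφ) → (∀ z, |ψ z| ≤ Cψ) →
        ∫ z, φ z * ∫ z', ψ z' ∂(K z) ∂πt = ∫ z, ψ z * ∫ z', φ z' ∂(K z) ∂πt)) ∧
    (∀ B : Set (Θ × ℝ≥0), MeasurableSet B → ∫⁻ z, K z B ∂πt = πt B) := by
  subst hα hprop
  set ν := lam ⊗ₘ M
  set Q : Θ × ℝ≥0 → Θ × ℝ≥0 → ℝ≥0∞ := fun z z' ↦ ENNReal.ofReal (q z.1 z'.1)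
  set ρ : Θ × ℝ≥0 → ℝ≥0∞ := fun z ↦ ENNReal.ofReal (f z.1) * z.2
  have hQm : Measurable (Function.uncurry Q) := by fun_prop
  have hwm : Measurable (Function.uncurry fun z z' : Θ × ℝ≥0 ↦ f z.1 * z.2 * q z.1 z'.1) := by
    fun_prop
  obtain rfl : K = metropolisHastingsKernel ν hQm (measurable_mhAcceptance_swap hwm) := by
    rw [hK]
    funext z
    dsimp only
    rw [Measure.withDensity_compProd (by fun_prop)]
    rfl
  have hπt' : πt = ν.withDensity ρ := by
    rw [hπt, hπ, Measure.withDensity_compProd hfm.ennreal_ofReal,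
      ← withDensity_mul _ (by fun_prop) (by fun_prop)]
    rfl
  have hrev := hπt' ▸ isReversible_metropolisHastingsKernel_mhAcceptance ν (by fun_prop) hQm hwm
    (fun z z' ↦ mul_nonneg (mul_nonneg (hf0 _) z.2.coe_nonneg) (hq0 _ _)) fun z z' ↦ by
      rw [ENNReal.ofReal_mul (mul_nonneg (hf0 _) z.2.coe_nonneg), ENNReal.ofReal_mul (hf0 _),
        ENNReal.ofReal_coe_nnreal]
  have hmarg : πt.map Prod.fst = π := hπt ▸ Measure.map_fst_withDensity_compProd (by fun_prop) hM
  have : IsProbabilityMeasure πt :=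
    (Measure.isProbabilityMeasure_map_iff measurable_fst.aemeasurable).mp (hmarg ▸ inferInstance)
  have := isMarkovKernel_metropolisHastingsKernel ν hQm (measurable_mhAcceptance_swap hwm)
    (fun z ↦ by
      rw [Measure.lintegral_compProd (f := Q z) (by fun_prop)]
      simp [Q, hq1])
    fun _ _ ↦ mhAcceptance_le_one _ _
  exact ⟨inferInstance, hmarg, fun φ ψ hφ hψ _ _ hCφ hCψ ↦
    hrev.integral_mul_integral_comm hφ hψ hCφ hCψ, fun B hB ↦ hrev.lintegral_apply hB⟩
end

section
/- Sequential Monte Carlo with auxiliary backward kernels (Del Moral–Doucet–Jasra weights): let S be a measurable space with σ-finite measure μ₀, let π_{n-1} and π_n be probability measures on S with densities f_{n-1} and f_n with respect to μ₀, and let K and L be Markov kernels on S with jointly measurable densities k(x|x') and l(x'|x) with respect to μ₀. Assume that f_{n-1}(x') k(x|x') > 0 whenever f_n(x) l(x'|x) > 0 (up to (μ₀⊗μ₀)-null sets), and define the weight w(x', x) := f_n(x) l(x'|x) / (f_{n-1}(x') k(x|x')) where the denominator is positive, and w := 0 otherwise. Then the measure π_n(dx) L(x, dx') on S × S is absolutely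 continuous with respect to π_{n-1}(dx') K(x', dx) with density w, and consequently, for every bounded measurable φ : S → ℝ, ∫∫ φ(x) w(x', x) K(x', dx) π_{n-1}(dx') = ∫ φ dπ_n. -/
open MeasureTheory ProbabilityTheory
open scoped ENNReal

/-!
Both joint laws have densities with respect to `μ₀ ⊗ μ₀`: the forward one `f_{n-1}(x') k(x|x')`,
and, once its coordinates are swapped, the backward one `f_n(x) l(x'|x)`. The support condition
makes the backward density a.e. equal to the forward density times `w`, which is the
Radon–Nikodym statement. Integrating `φ(x)` against it and using that the first marginal of
`π_n ⊗ L` is `π_n` (as `L` is Markov) gives the integral identity.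
-/

lemma ENNReal.ofReal_eq_ofReal_mul_ofReal_ite_div {a b : ℝ} (h : 0 < b → 0 < a) :
    ENNReal.ofReal b = ENNReal.ofReal a * ENNReal.ofReal (if 0 < a then b / a else 0) := by
  split_ifs with ha
  · rw [← ENNReal.ofReal_mul ha.le, mul_div_cancel₀ _ ha.ne']
  · rw [ENNReal.ofReal_of_nonpos (not_lt.1 (mt h ha)), ENNReal.ofReal_zero, mul_zero]

lemma ite_pos_div_nonneg {a b : ℝ} (hb : 0 ≤ b) : 0 ≤ if 0 < a then b / a else 0 := by
  split_ifs with ha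
  exacts [div_nonneg hb ha.le, le_rfl]

lemma Measurable.ite_pos_div {α : Type*} [MeasurableSpace α] {a b : α → ℝ} (ha : Measurable a)
    (hb : Measurable b) : Measurable fun x => if 0 < a x then b x / a x else 0 :=
  Measurable.ite (measurableSet_lt measurable_const ha) (hb.div ha) measurable_const

namespace MeasureTheory

variable {α β : Type*} [MeasurableSpace α] [MeasurableSpace β]

lemma Measure.withDensity_compProd_eq_withDensity_prod {μ : Measure α} {ν : Measure β}
    [SFinite μ] [SFinite ν] {f : α → ℝ≥0∞} (hf : Measurable f)
    {g : α → β → ℝ≥0∞} (hg : Measurable (Function.uncurry g))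
    {κ : Kernel α β} [IsSFiniteKernel κ] (hκ : ∀ a, κ a = ν.withDensity (g a)) :
    μ.withDensity f ⊗ₘ κ = (μ.prod ν).withDensity fun z => f z.1 * g z.1 z.2 := by
  obtain rfl : κ = (Kernel.const α ν).withDensity g := by
    ext1 a
    rw [hκ, Kernel.withDensity_apply _ hg, Kernel.const_apply]
  rw [Measure.compProd_withDensity hg, Measure.compProd_const, prod_withDensity_left hf]
  exact (withDensity_mul _ (hf.comp measurable_fst) hg).symm

lemma MeasurableEquiv.map_withDensity (e : α ≃ᵐ β) (μ : Measure α) (f : α → ℝ≥0∞) :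
    (μ.withDensity f).map e = (μ.map e).withDensity (f ∘ e.symm) := by
  ext s hs
  rw [Measure.map_apply e.measurable hs, withDensity_apply _ (e.measurable hs),
    withDensity_apply _ hs, e.restrict_map, lintegral_map_equiv]
  simp

lemma Measure.map_swap_withDensity_prod (μ : Measure α) (ν : Measure β) [SFinite μ] [SFinite ν]
    (f : α × β → ℝ≥0∞) :
    ((μ.prod ν).withDensity f).map Prod.swap = (ν.prod μ).withDensity (f ∘ Prod.swap) := by
  have h := (MeasurableEquiv.prodComm (α := α) (β := β)).map_withDensity (μ.prod ν) f
  change Measure.map Prod.swap _ = (Measure.map Prod.swap _).withDensity (f ∘ Prod.swap) at h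
  rwa [Measure.prod_swap] at h

lemma integrable_withDensity_ofReal_iff {μ : Measure α} {w : α → ℝ} (hw : Measurable w)
    (hw0 : ∀ x, 0 ≤ w x) {φ : α → ℝ} :
    Integrable φ (μ.withDensity fun x => ENNReal.ofReal (w x)) ↔
      Integrable (fun x => φ x * w x) μ := by
  rw [integrable_withDensity_iff_integrable_smul' hw.ennreal_ofReal
    (ae_of_all _ fun _ => ENNReal.ofReal_lt_top)]
  simp_rw [ENNReal.toReal_ofReal (hw0 _), smul_eq_mul, mul_comm]

lemma integral_withDensity_ofReal {μ : Measure α} {w : α → ℝ} (hw : Measurable w)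
    (hw0 : ∀ x, 0 ≤ w x) (φ : α → ℝ) :
    ∫ x, φ x ∂(μ.withDensity fun x => ENNReal.ofReal (w x)) = ∫ x, φ x * w x ∂μ := by
  rw [integral_withDensity_eq_integral_toReal_smul hw.ennreal_ofReal
    (ae_of_all _ fun _ => ENNReal.ofReal_lt_top)]
  simp_rw [ENNReal.toReal_ofReal (hw0 _), smul_eq_mul, mul_comm]

lemma Measure.integral_snd_map_swap_compProd (μ : Measure α) [SFinite μ] (κ : Kernel α β)
    [IsMarkovKernel κ] {φ : α → ℝ} (hφ : Measurable φ) :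
    ∫ z, φ z.2 ∂((μ ⊗ₘ κ).map Prod.swap) = ∫ x, φ x ∂μ :=
  calc ∫ z, φ z.2 ∂((μ ⊗ₘ κ).map Prod.swap) = ∫ x, φ x ∂((μ ⊗ₘ κ).map Prod.swap).snd :=
        (integral_map measurable_snd.aemeasurable hφ.aestronglyMeasurable).symm
    _ = ∫ x, φ x ∂μ := by rw [Measure.snd_map_swap, Measure.fst_compProd]

end MeasureTheory

theorem smc_auxiliary_backward_kernel_weights_general {S : Type*} [MeasurableSpace S]
    (μ0 : Measure S) [SigmaFinite μ0]
    (πp πn : Measure S) [IsProbabilityMeasure πp] [IsProbabilityMeasure πn]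
    (fp fn : S → ℝ) (hfp0 : ∀ x, 0 ≤ fp x) (hfn0 : ∀ x, 0 ≤ fn x)
    (hfpm : Measurable fp) (hfnm : Measurable fn)
    (hπp : πp = μ0.withDensity fun x => ENNReal.ofReal (fp x))
    (hπn : πn = μ0.withDensity fun x => ENNReal.ofReal (fn x))
    (K L : Kernel S S) [IsMarkovKernel K] [IsMarkovKernel L]
    (k l : S → S → ℝ) (hl0 : ∀ x x', 0 ≤ l x x')
    (hkm : Measurable (Function.uncurry k)) (hlm : Measurable (Function.uncurry l))
    (hK : ∀ x', K x' = μ0.withDensity fun x => ENNReal.ofReal (k x' x))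
    (hL : ∀ x, L x = μ0.withDensity fun x' => ENNReal.ofReal (l x x'))
    (hpos : ∀ᵐ z ∂(μ0.prod μ0), 0 < fn z.2 * l z.2 z.1 → 0 < fp z.1 * k z.1 z.2)
    (w : S → S → ℝ)
    (hw : w = fun x' x =>
      if 0 < fp x' * k x' x then fn x * l x x' / (fp x' * k x' x) else 0) :
    ((πn.compProd L).map Prod.swap) ≪ (πp.compProd K) ∧
    ((πn.compProd L).map Prod.swap) =
      (πp.compProd K).withDensity (fun z => ENNReal.ofReal (w z.1 z.2)) ∧
    ∀ (φ : S → ℝ) (C : ℝ), Measurable φ → (∀ s, |φ s| ≤ C) →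
      ∫ x', ∫ x, φ x * w x' x ∂(K x') ∂πp = ∫ x, φ x ∂πn := by
  have hforward : πp ⊗ₘ K =
      (μ0.prod μ0).withDensity fun z => ENNReal.ofReal (fp z.1 * k z.1 z.2) := by
    simp_rw [hπp, Measure.withDensity_compProd_eq_withDensity_prod hfpm.ennreal_ofReal
      hkm.ennreal_ofReal hK, ENNReal.ofReal_mul (hfp0 _)]
  have hbackward : (πn ⊗ₘ L).map Prod.swap =
      (μ0.prod μ0).withDensity fun z => ENNReal.ofReal (fn z.2 * l z.2 z.1) := by
    simp_rw [hπn, Measure.withDensity_compProd_eq_withDensity_prod hfnm.ennreal_ofReal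
      hlm.ennreal_ofReal hL, Measure.map_swap_withDensity_prod, ENNReal.ofReal_mul (hfn0 _)]
    rfl
  have hwm : Measurable fun z : S × S => w z.1 z.2 := by
    have hl_swap : Measurable fun z : S × S => l z.2 z.1 := hlm.comp measurable_swap
    subst hw
    exact Measurable.ite_pos_div (by fun_prop) (by fun_prop)
  have hw0 (z : S × S) : 0 ≤ w z.1 z.2 :=
    hw ▸ ite_pos_div_nonneg (mul_nonneg (hfn0 _) (hl0 _ _))
  have hdensity : (πn ⊗ₘ L).map Prod.swap =
      (πp ⊗ₘ K).withDensity fun z => ENNReal.ofReal (w z.1 z.2) := by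
    rw [hbackward, hforward, ← withDensity_mul _ (by fun_prop) hwm.ennreal_ofReal]
    refine withDensity_congr_ae (hpos.mono fun z hz => ?_)
    subst hw
    exact ENNReal.ofReal_eq_ofReal_mul_ofReal_ite_div hz
  refine ⟨hdensity ▸ withDensity_absolutelyContinuous _ _, hdensity, fun φ C hφ hC => ?_⟩
  have hφ_int : Integrable (fun z : S × S => φ z.2) ((πn ⊗ₘ L).map Prod.swap) :=
    Integrable.of_bound (hφ.comp measurable_snd).aestronglyMeasurable C
      (ae_of_all _ fun z => (Real.norm_eq_abs _).trans_le (hC z.2))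
  rw [hdensity, integrable_withDensity_ofReal_iff hwm hw0] at hφ_int
  rw [← Measure.integral_compProd hφ_int, ← integral_withDensity_ofReal hwm hw0, ← hdensity,
    Measure.integral_snd_map_swap_compProd πn L hφ]

/-- **Sequential Monte Carlo with auxiliary backward kernels
(Del Moral–Doucet–Jasra weights).** Let `π_{n-1}, π_n` have densities
`f_{n-1}, f_n` w.r.t. a σ-finite `μ₀`, and let `K, L` be Markov kernels with
jointly measurable densities `k(x|x')`, `l(x'|x)` w.r.t. `μ₀`. If
`f_{n-1}(x')k(x|x') > 0` whenever `f_n(x)l(x'|x) > 0` (up to `μ₀⊗μ₀`-null sets),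
then with `w(x',x) = f_n(x)l(x'|x)/(f_{n-1}(x')k(x|x'))` (and `0` where the
denominator vanishes), the measure `π_n(dx)L(x,dx')` on `S × S` is absolutely
continuous w.r.t. `π_{n-1}(dx')K(x',dx)` with density `w`; consequently
`∫∫ φ(x) w(x',x) K(x',dx) π_{n-1}(dx') = ∫ φ dπ_n` for bounded measurable `φ`. -/
theorem smc_auxiliary_backward_kernel_weights {S : Type*} [MeasurableSpace S]
    (μ0 : Measure S) [SigmaFinite μ0]
    (πp πn : Measure S) [IsProbabilityMeasure πp] [IsProbabilityMeasure πn]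
    (fp fn : S → ℝ) (hfp0 : ∀ x, 0 ≤ fp x) (hfn0 : ∀ x, 0 ≤ fn x)
    (hfpm : Measurable fp) (hfnm : Measurable fn)
    (hπp : πp = μ0.withDensity fun x => ENNReal.ofReal (fp x))
    (hπn : πn = μ0.withDensity fun x => ENNReal.ofReal (fn x))
    (K L : Kernel S S) [IsMarkovKernel K] [IsMarkovKernel L]
    (k l : S → S → ℝ) (hk0 : ∀ x' x, 0 ≤ k x' x) (hl0 : ∀ x x', 0 ≤ l x x')
    (hkm : Measurable (Function.uncurry k)) (hlm : Measurable (Function.uncurry l))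
    (hK : ∀ x', K x' = μ0.withDensity fun x => ENNReal.ofReal (k x' x))
    (hL : ∀ x, L x = μ0.withDensity fun x' => ENNReal.ofReal (l x x'))
    (hpos : ∀ᵐ z ∂(μ0.prod μ0), 0 < fn z.2 * l z.2 z.1 → 0 < fp z.1 * k z.1 z.2)
    (w : S → S → ℝ)
    (hw : w = fun x' x =>
      if 0 < fp x' * k x' x then fn x * l x x' / (fp x' * k x' x) else 0) :
    ((πn.compProd L).map Prod.swap) ≪ (πp.compProd K) ∧
    ((πn.compProd L).map Prod.swap) =
      (πp.compProd K).withDensity (fun z => ENNReal.ofReal (w z.1 z.2)) ∧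
    ∀ (φ : S → ℝ) (C : ℝ), Measurable φ → (∀ s, |φ s| ≤ C) →
      ∫ x', ∫ x, φ x * w x' x ∂(K x') ∂πp = ∫ x, φ x ∂πn :=
  smc_auxiliary_backward_kernel_weights_general μ0 πp πn fp fn hfp0 hfn0 hfpm hfnm hπp hπn K L k l
    hl0 hkm hlm hK hL hpos w hw
end
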